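/- arXiv:2001.00250 — 9 statements merged into one kernel-verified Lean document; each statement's English description precedes it below -/
import Mathlib

section
/- Let φ be a complex-valued Schwartz function on ℝ with φ(x) = 0 for all x ≤ 0, and let ψ(x) = φ(x)/x for x > 0. Then for all natural numbers k, n and all 0 < x < 1 one has |x^k · ψ^{(n)}(x)| ≤ Σ_{j=0}^{n} (1 / ((n−j)! · (n+1))) · sup_{y ∈ ℝ} |φ^{(2n+1−j)}(y)|. -/
/-!
Write `ψ = x⁻¹ • φ`. By Leibniz, `ψ⁽ⁿ⁾(x)` is a sum of `C(n,i) (x⁻¹)⁽ⁱ⁾ φ⁽ⁿ⁻ⁱ⁾(x)` with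
`|(x⁻¹)⁽ⁱ⁾| = i! / x^(i+1)`. The singularity is compensated because `φ` vanishes to infinite
order at `0`: all its derivatives vanish on `(-∞, 0]`, so `n + 1` applications of the mean value
inequality give `|φ⁽ⁿ⁻ⁱ⁾(x)| ≤ x^(n+1) / (n+1)! · sup |φ⁽²ⁿ⁺¹⁻ⁱ⁾|`. The remaining factor
`C(n,i) i! x^(n-i) / (n+1)!` is at most `1 / ((n-i)! (n+1))` for `x ≤ 1`.
-/

open Set Filter Topology

section

open Nat

variable {E : Type*} [NormedAddCommGroup E] [NormedSpace ℝ E] {f : ℝ → E}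

theorem iteratedDeriv_eq_zero_of_forall_le_eq_zero {m : ℕ} {a : ℝ} (hf : ContDiff ℝ m f)
    (h : ∀ y ≤ a, f y = 0) {y : ℝ} (hy : y ≤ a) : iteratedDeriv m f y = 0 := by
  have hIio : EqOn (iteratedDeriv m f) 0 (Iio a) := fun z hz => by
    have hfz : f =ᶠ[𝓝 z] fun _ => 0 :=
      eventually_of_mem (Iio_mem_nhds hz) fun w hw => h w (le_of_lt hw)
    simpa using hfz.iteratedDeriv_eq m
  have hcl := hIio.closure (hf.continuous_iteratedDeriv' m) continuous_const
  rw [closure_Iio] at hcl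
  exact hcl hy

theorem norm_iteratedDeriv_le_of_forall_le_eq_zero {a C x : ℝ} (m i : ℕ)
    (hf : ContDiff ℝ (i + m : ℕ) f) (h : ∀ y ≤ a, f y = 0)
    (hC : ∀ y, ‖iteratedDeriv (i + m) f y‖ ≤ C) (hx : a ≤ x) :
    ‖iteratedDeriv i f x‖ ≤ (x - a) ^ m / m ! * C := by
  induction m generalizing i x with
  | zero => simpa using hC x
  | succ m ih =>
    have hB : ∀ t, HasDerivAt (fun t => (t - a) ^ (m + 1) / (m + 1)! * C)
        ((t - a) ^ m / m ! * C) t := fun t => by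
      refine (((hasDerivAt_pow (m + 1) (t - a)).comp_sub_const t a).div_const _ |>.mul_const C)
        |>.congr_deriv ?_
      push_cast [factorial_succ]
      field_simp
    have hderiv : ∀ t ∈ Ico a x,
        HasDerivWithinAt (iteratedDeriv i f) (iteratedDeriv (i + 1) f t) (Ici t) t := by
      intro t _
      rw [iteratedDeriv_succ]
      exact ((hf.differentiable_iteratedDeriv i (by norm_cast; omega)) t).hasDerivAt
        |>.hasDerivWithinAt
    have hbound : ∀ t ∈ Ico a x, ‖iteratedDeriv (i + 1) f t‖ ≤ (t - a) ^ m / m ! * C :=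
      fun t ht => ih (i + 1) (by convert hf using 2; omega)
        (by convert hC using 4; omega) ht.1
    have ha : ‖iteratedDeriv i f a‖ ≤ (a - a) ^ (m + 1) / (m + 1)! * C := by
      rw [iteratedDeriv_eq_zero_of_forall_le_eq_zero (hf.of_le (by norm_cast; omega)) h le_rfl]
      simp
    exact image_norm_le_of_norm_deriv_right_le_deriv_boundary
      (hf.continuous_iteratedDeriv i (by norm_cast; omega)).continuousOn hderiv ha hB hbound
      ⟨hx, le_rfl⟩

theorem norm_iteratedDeriv_inv_smul_le {n : ℕ} {x : ℝ} (hf : ContDiffOn ℝ n f (Ioi 0))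
    (hx : 0 < x) :
    ‖iteratedDeriv n (fun y => y⁻¹ • f y) x‖ ≤
      ∑ i ∈ Finset.range (n + 1), (n.choose i : ℝ) * (i ! / x ^ (i + 1)) *
        ‖iteratedDeriv (n - i) f x‖ := by
  have hinv : ContDiffOn ℝ n (fun y : ℝ => y⁻¹) (Ioi 0) :=
    contDiffOn_id.inv fun y hy => ne_of_gt hy
  rw [← norm_iteratedFDeriv_eq_norm_iteratedDeriv,
    ← iteratedFDerivWithin_of_isOpen n isOpen_Ioi hx]
  refine (norm_iteratedFDerivWithin_smul_le hinv hf isOpen_Ioi.uniqueDiffOn hx le_rfl).trans_eq ?_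
  refine Finset.sum_congr rfl fun i _ => ?_
  rw [iteratedFDerivWithin_of_isOpen _ isOpen_Ioi hx, norm_iteratedFDeriv_eq_norm_iteratedDeriv,
    iteratedFDerivWithin_of_isOpen _ isOpen_Ioi hx, norm_iteratedFDeriv_eq_norm_iteratedDeriv,
    iteratedDeriv_eq_iterate, iter_deriv_inv, norm_mul, norm_mul, norm_pow, norm_neg, norm_one,
    one_pow, one_mul, Real.norm_natCast, norm_zpow, Real.norm_of_nonneg hx.le,
    show (-1 - i : ℤ) = -(i + 1 : ℕ) by push_cast; ring, zpow_neg, zpow_natCast, div_eq_mul_inv]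

end

theorem SchwartzMap.norm_iteratedDeriv_le_iSup {F : Type*} [NormedAddCommGroup F]
    [NormedSpace ℝ F] (f : SchwartzMap ℝ F) (m : ℕ) (y : ℝ) :
    ‖iteratedDeriv m f y‖ ≤ ⨆ z, ‖iteratedDeriv m f z‖ :=
  le_ciSup ⟨SchwartzMap.seminorm ℝ 0 m f, by
    rintro _ ⟨z, rfl⟩
    simpa using SchwartzMap.le_seminorm' ℝ 0 m f z⟩ y

open Nat in
theorem choose_mul_factorial_div_pow_mul_pow_div_factorial_le {n i : ℕ} (hi : i ≤ n) {x : ℝ}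
    (hx0 : 0 < x) (hx1 : x ≤ 1) :
    (n.choose i : ℝ) * (i ! / x ^ (i + 1)) * (x ^ (n + 1) / (n + 1)!) ≤
      1 / ((n - i)! * (n + 1)) := by
  have hsplit : x ^ (n + 1) = x ^ (i + 1) * x ^ (n - i) := by rw [← pow_add]; congr 1; omega
  calc (n.choose i : ℝ) * (i ! / x ^ (i + 1)) * (x ^ (n + 1) / (n + 1)!)
      = 1 / ((n - i)! * (n + 1)) * x ^ (n - i) := by
        rw [Nat.cast_choose ℝ hi, hsplit]
        push_cast [factorial_succ]
        field_simp
    _ ≤ 1 / ((n - i)! * (n + 1)) := mul_le_of_le_one_right (by positivity) (pow_le_one₀ hx0.le hx1)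

open Finset in
/-- For a Schwartz function `φ` on `ℝ` vanishing on `(-∞,0]` and `ψ x = φ x / x`,
for all `k n : ℕ` and `0 < x < 1` one has
`|x^k ψ^{(n)}(x)| ≤ ∑_{j=0}^{n} (1 / ((n−j)!·(n+1))) · sup_y |φ^{(2n+1−j)}(y)|`. -/
theorem schwartz_div_x_derivative_bound (φ : SchwartzMap ℝ ℂ)
    (hφ : ∀ x : ℝ, x ≤ 0 → φ x = 0) (k n : ℕ) (x : ℝ) (hx0 : 0 < x) (hx1 : x < 1) :
    x ^ k * ‖iteratedDeriv n (fun y : ℝ => φ y / (y : ℂ)) x‖ ≤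
      ∑ j ∈ Finset.range (n + 1),
        (1 / ((Nat.factorial (n - j) : ℝ) * ((n : ℝ) + 1))) *
          ⨆ y : ℝ, ‖iteratedDeriv (2 * n + 1 - j) (⇑φ) y‖ := by
  have hψ : (fun y : ℝ => φ y / (y : ℂ)) = fun y => y⁻¹ • φ y := by
    funext y
    rw [Complex.real_smul, div_eq_inv_mul, Complex.ofReal_inv]
  calc x ^ k * ‖iteratedDeriv n (fun y : ℝ => φ y / (y : ℂ)) x‖
      ≤ ‖iteratedDeriv n (fun y : ℝ => φ y / (y : ℂ)) x‖ :=
        mul_le_of_le_one_left (norm_nonneg _) (pow_le_one₀ hx0.le hx1.le)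
    _ ≤ ∑ i ∈ range (n + 1), (n.choose i : ℝ) * (i.factorial / x ^ (i + 1)) *
          ‖iteratedDeriv (n - i) φ x‖ :=
        hψ ▸ norm_iteratedDeriv_inv_smul_le (φ.smooth n).contDiffOn hx0
    _ ≤ _ := sum_le_sum fun i hi => by
        have hin : i ≤ n := mem_range_succ_iff.mp hi
        have htaylor := norm_iteratedDeriv_le_of_forall_le_eq_zero (n + 1) (n - i) (φ.smooth _) hφ
          (φ.norm_iteratedDeriv_le_iSup _) hx0.le
        rw [sub_zero, show n - i + (n + 1) = 2 * n + 1 - i by omega] at htaylor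
        have hS : 0 ≤ ⨆ y : ℝ, ‖iteratedDeriv (2 * n + 1 - i) φ y‖ :=
          (norm_nonneg _).trans (φ.norm_iteratedDeriv_le_iSup _ 0)
        calc (n.choose i : ℝ) * (i.factorial / x ^ (i + 1)) * ‖iteratedDeriv (n - i) φ x‖
            ≤ (n.choose i : ℝ) * (i.factorial / x ^ (i + 1)) * (x ^ (n + 1) / (n + 1).factorial) *
                ⨆ y : ℝ, ‖iteratedDeriv (2 * n + 1 - i) φ y‖ := by
              rw [mul_assoc _ (x ^ (n + 1) / _)]
              gcongr
          _ ≤ _ := mul_le_mul_of_nonneg_right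
              (choose_mul_factorial_div_pow_mul_pow_div_factorial_le hin hx0 hx1.le) hS
end

section
/- Let v be any real number and let φ be a complex-valued Schwartz function on ℝ with φ(x) = 0 for all x ≤ 0. Then the function x ↦ x^v · φ(x) for x > 0, extended by 0 for x ≤ 0, is again a Schwartz function on ℝ vanishing at every x ≤ 0. -/
/-!
On `(0, ∞)` the derivative of `x ^ v • φ x` is `v • x ^ (v - 1) • φ x + x ^ v • φ' x`: a sum of
two functions of the same shape, with `v` lowered by one or `φ` replaced by `φ'`, which again
vanishes on `(-∞, 0]`. At `0` the extension by zero is flat, because `φ`, vanishing to the left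
of `0`, is `O(x ^ N)` for every `N` by repeated use of the mean value inequality, which beats any
negative power `x ^ v`. Induction on the order of differentiation, over all `v` and `φ` at once,
then gives smoothness and, with the rapid decay of `φ` at `+∞`, the Schwartz bounds.
-/

open Real Filter Asymptotics Set Topology
open scoped ContDiff SchwartzMap

variable {F : Type*} [NormedAddCommGroup F] [NormedSpace ℝ F]

theorem deriv_eq_zero_of_forall_le_eq_zero {f : ℝ → F} {x : ℝ} (hf : DifferentiableAt ℝ f x)
    (h : ∀ y ≤ x, f y = 0) : deriv f x = 0 :=
  (uniqueDiffWithinAt_Iic x).eq_deriv _ hf.hasDerivAt.hasDerivWithinAt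
    ((hasDerivWithinAt_const x _ 0).congr (fun y hy => h y hy) (h x le_rfl))

theorem norm_le_mul_pow_succ_of_norm_deriv_le {f : ℝ → F} (hf : Differentiable ℝ f)
    (h₀ : f 0 = 0) {C : ℝ} (hC : 0 ≤ C) {N : ℕ} (hbound : ∀ t, 0 ≤ t → ‖deriv f t‖ ≤ C * t ^ N)
    {x : ℝ} (hx : 0 ≤ x) : ‖f x‖ ≤ C * x ^ (N + 1) := by
  have hmvt := norm_image_sub_le_of_norm_deriv_le_segment' (a := 0) (b := x) (C := C * x ^ N)
    (fun t _ => (hf t).hasDerivAt.hasDerivWithinAt)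
    (fun t ht => (hbound t ht.1).trans (by gcongr; exacts [ht.1, ht.2.le])) x (right_mem_Icc.mpr hx)
  rw [h₀, sub_zero, sub_zero] at hmvt
  rwa [pow_succ, ← mul_assoc]

namespace SchwartzMap

theorem derivCLM_apply_eq_zero_of_vanishing {φ : 𝓢(ℝ, F)} (hφ : ∀ x ≤ 0, φ x = 0) :
    ∀ x ≤ 0, derivCLM ℝ F φ x = 0 := by
  intro x hx
  rw [derivCLM_apply]
  exact deriv_eq_zero_of_forall_le_eq_zero φ.differentiableAt fun y hy => hφ y (hy.trans hx)

theorem exists_norm_le_mul_pow_of_vanishing (N : ℕ) {φ : 𝓢(ℝ, F)} (hφ : ∀ x ≤ 0, φ x = 0) :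
    ∃ C, 0 ≤ C ∧ ∀ x, 0 ≤ x → ‖φ x‖ ≤ C * x ^ N := by
  induction N generalizing φ with
  | zero =>
    exact ⟨SchwartzMap.seminorm ℝ 0 0 φ, apply_nonneg _ _, fun x _ => by
      simpa using norm_le_seminorm ℝ φ x⟩
  | succ N ih =>
    obtain ⟨C, hC, hbound⟩ := ih (derivCLM_apply_eq_zero_of_vanishing hφ)
    refine ⟨C, hC, fun x hx => norm_le_mul_pow_succ_of_norm_deriv_le φ.differentiable
      (hφ 0 le_rfl) hC (fun t ht => ?_) hx⟩
    simpa only [derivCLM_apply] using hbound t ht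

end SchwartzMap

noncomputable def posRpowMul (v : ℝ) (f : ℝ → F) (x : ℝ) : F :=
  if 0 < x then x ^ v • f x else 0

section posRpowMul

variable {v x : ℝ} {f : ℝ → F}

theorem posRpowMul_of_nonpos (hx : x ≤ 0) : posRpowMul v f x = 0 := by
  simp [posRpowMul, not_lt.mpr hx]

theorem posRpowMul_of_pos (hx : 0 < x) : posRpowMul v f x = x ^ v • f x := by
  simp [posRpowMul, hx]

theorem norm_posRpowMul_of_pos (hx : 0 < x) : ‖posRpowMul v f x‖ = x ^ v * ‖f x‖ := by
  rw [posRpowMul_of_pos hx, norm_smul, norm_of_nonneg (rpow_nonneg hx.le v)]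

end posRpowMul

namespace SchwartzMap

variable {φ : 𝓢(ℝ, F)} (hφ : ∀ x ≤ 0, φ x = 0)
include hφ

theorem exists_norm_posRpowMul_le_pow (v : ℝ) (r : ℕ) :
    ∃ C, 0 ≤ C ∧ ∀ x, 0 < x → x ≤ 1 → ‖posRpowMul v φ x‖ ≤ C * x ^ r := by
  obtain ⟨C, hC, hbound⟩ := exists_norm_le_mul_pow_of_vanishing ⌈r - v⌉₊ hφ
  refine ⟨C, hC, fun x hx hx1 => ?_⟩
  have hexp : x ^ (v + ⌈r - v⌉₊) ≤ x ^ r := by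
    rw [← rpow_natCast x r]
    exact rpow_le_rpow_of_exponent_ge hx hx1 (by linarith [Nat.le_ceil (r - v)])
  calc ‖posRpowMul v φ x‖ = x ^ v * ‖φ x‖ := norm_posRpowMul_of_pos hx
    _ ≤ x ^ v * (C * x ^ ⌈r - v⌉₊) := by gcongr; exact hbound x hx.le
    _ = C * x ^ (v + ⌈r - v⌉₊) := by rw [rpow_add_natCast hx.ne']; ring
    _ ≤ C * x ^ r := by gcongr

theorem exists_norm_pow_mul_norm_posRpowMul_le (v : ℝ) (k : ℕ) :
    ∃ C, ∀ x, ‖x‖ ^ k * ‖posRpowMul v φ x‖ ≤ C := by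
  obtain ⟨C, -, hnear⟩ := exists_norm_posRpowMul_le_pow hφ v 0
  let S := SchwartzMap.seminorm ℝ (k + ⌈v⌉₊) 0 φ
  refine ⟨max C S, fun x => ?_⟩
  rcases le_or_gt x 0 with hx | hx
  · simpa [posRpowMul_of_nonpos hx] using Or.inr (apply_nonneg _ φ)
  rcases le_or_gt x 1 with hx1 | hx1
  · have hpow : ‖x‖ ^ k ≤ 1 := pow_le_one₀ (norm_nonneg x) (by rwa [norm_of_nonneg hx.le])
    calc ‖x‖ ^ k * ‖posRpowMul v φ x‖ ≤ ‖posRpowMul v φ x‖ :=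
          mul_le_of_le_one_left (norm_nonneg _) hpow
      _ ≤ C := by simpa using hnear x hx hx1
      _ ≤ max C S := le_max_left _ _
  · have hexp : x ^ v ≤ ‖x‖ ^ ⌈v⌉₊ := by
      rw [norm_of_nonneg hx.le, ← rpow_natCast]
      exact rpow_le_rpow_of_exponent_le hx1.le (Nat.le_ceil v)
    calc ‖x‖ ^ k * ‖posRpowMul v φ x‖ = ‖x‖ ^ k * (x ^ v * ‖φ x‖) := by
          rw [norm_posRpowMul_of_pos hx]
      _ ≤ ‖x‖ ^ k * (‖x‖ ^ ⌈v⌉₊ * ‖φ x‖) := by gcongr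
      _ = ‖x‖ ^ (k + ⌈v⌉₊) * ‖φ x‖ := by ring
      _ ≤ S := norm_pow_mul_le_seminorm ℝ φ _ x
      _ ≤ max C S := le_max_right _ _

theorem hasDerivAt_posRpowMul_zero (v : ℝ) : HasDerivAt (posRpowMul v φ) 0 0 := by
  have hsq : posRpowMul v φ =O[𝓝 0] fun y => y ^ 2 := by
    obtain ⟨C, hC, hnear⟩ := exists_norm_posRpowMul_le_pow hφ v 2
    refine IsBigO.of_bound C ?_
    filter_upwards [Ioo_mem_nhds neg_one_lt_zero one_pos] with y hy
    rcases le_or_gt y 0 with hy0 | hy0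
    · simp only [posRpowMul_of_nonpos hy0, norm_zero]; positivity
    · simpa [norm_of_nonneg hy0.le] using hnear y hy0 hy.2.le
  rw [hasDerivAt_iff_isLittleO]
  simpa [posRpowMul_of_nonpos le_rfl] using hsq.trans_isLittleO (isLittleO_pow_id one_lt_two)

theorem hasDerivAt_posRpowMul (v x : ℝ) :
    HasDerivAt (posRpowMul v φ)
      (v • posRpowMul (v - 1) φ x + posRpowMul v (derivCLM ℝ F φ) x) x := by
  rcases lt_trichotomy x 0 with hx | rfl | hx
  · rw [posRpowMul_of_nonpos hx.le, posRpowMul_of_nonpos hx.le, smul_zero, add_zero]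
    refine (hasDerivAt_const x 0).congr_of_eventuallyEq ?_
    filter_upwards [Iio_mem_nhds hx] with y hy using posRpowMul_of_nonpos (le_of_lt hy)
  · simpa [posRpowMul_of_nonpos le_rfl] using hasDerivAt_posRpowMul_zero hφ v
  · have hprod := ((hasDerivAt_rpow_const (p := v) (Or.inl hx.ne')).smul (φ.hasDerivAt x))
    refine (hprod.congr_of_eventuallyEq ?_).congr_deriv ?_
    · filter_upwards [Ioi_mem_nhds hx] with y hy using posRpowMul_of_pos hy
    · rw [posRpowMul_of_pos hx, posRpowMul_of_pos hx, derivCLM_apply, smul_smul, mul_comm v,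
        add_comm]

theorem deriv_posRpowMul (v : ℝ) :
    deriv (posRpowMul v φ) = v • posRpowMul (v - 1) φ + posRpowMul v (derivCLM ℝ F φ) :=
  funext fun x => (hasDerivAt_posRpowMul hφ v x).deriv

theorem contDiff_posRpowMul (n : ℕ) (v : ℝ) : ContDiff ℝ n (posRpowMul v φ) := by
  induction n generalizing v φ with
  | zero =>
    exact contDiff_zero.mpr
      (continuous_iff_continuousAt.mpr fun x => (hasDerivAt_posRpowMul hφ v x).continuousAt)
  | succ n ih =>
    rw [Nat.cast_add_one, contDiff_succ_iff_deriv, deriv_posRpowMul hφ]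
    exact ⟨fun x => (hasDerivAt_posRpowMul hφ v x).differentiableAt, by simp,
      (ih hφ (v - 1)).const_smul v |>.add (ih (derivCLM_apply_eq_zero_of_vanishing hφ) v)⟩

theorem exists_norm_pow_mul_norm_iteratedDeriv_posRpowMul_le (n : ℕ) (v : ℝ) (k : ℕ) :
    ∃ C, ∀ x, ‖x‖ ^ k * ‖iteratedDeriv n (posRpowMul v φ) x‖ ≤ C := by
  induction n generalizing v φ with
  | zero => simpa using exists_norm_pow_mul_norm_posRpowMul_le hφ v k
  | succ n ih =>
    have hφ' := derivCLM_apply_eq_zero_of_vanishing hφ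
    obtain ⟨A, hA⟩ := ih hφ (v - 1)
    obtain ⟨B, hB⟩ := ih hφ' v
    refine ⟨|v| * A + B, fun x => ?_⟩
    have hsmooth : ContDiff ℝ n (v • posRpowMul (v - 1) φ) :=
      (contDiff_posRpowMul hφ n (v - 1)).const_smul v
    rw [iteratedDeriv_succ', deriv_posRpowMul hφ, iteratedDeriv_add hsmooth.contDiffAt
      (contDiff_posRpowMul hφ' n v).contDiffAt, iteratedDeriv_const_smul_field]
    calc _ ≤ ‖x‖ ^ k * (|v| * ‖iteratedDeriv n (posRpowMul (v - 1) φ) x‖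
            + ‖iteratedDeriv n (posRpowMul v (derivCLM ℝ F φ)) x‖) := by
          gcongr
          exact (norm_add_le _ _).trans_eq (by rw [norm_smul, norm_eq_abs])
      _ = |v| * (‖x‖ ^ k * ‖iteratedDeriv n (posRpowMul (v - 1) φ) x‖)
            + ‖x‖ ^ k * ‖iteratedDeriv n (posRpowMul v (derivCLM ℝ F φ)) x‖ := by ring
      _ ≤ |v| * A + B := by gcongr; exacts [hA x, hB x]

noncomputable def posRpowMulOfVanishing (v : ℝ) : 𝓢(ℝ, F) where
  toFun := posRpowMul v φ
  smooth' := contDiff_infty.mpr fun n => contDiff_posRpowMul hφ n v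
  decay' k n := by
    simpa only [norm_iteratedFDeriv_eq_norm_iteratedDeriv]
      using exists_norm_pow_mul_norm_iteratedDeriv_posRpowMul_le hφ n v k

end SchwartzMap

/-- For any `v : ℝ` and any Schwartz function `φ` on `ℝ` vanishing on `(-∞,0]`,
the function `x ↦ x^v · φ x` for `x > 0`, extended by `0` for `x ≤ 0`, is again a Schwartz
function vanishing on `(-∞,0]`. -/
theorem schwartz_rpow_mul_of_vanishing_nonpos (v : ℝ) (φ : SchwartzMap ℝ ℂ)
    (hφ : ∀ x : ℝ, x ≤ 0 → φ x = 0) :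
    ∃ ψ : SchwartzMap ℝ ℂ,
      (∀ x : ℝ, x ≤ 0 → ψ x = 0) ∧ ∀ x : ℝ, 0 < x → ψ x = ((x ^ v : ℝ) : ℂ) * φ x :=
  ⟨SchwartzMap.posRpowMulOfVanishing hφ v, fun _ hx => posRpowMul_of_nonpos hx,
    fun _ hx => (posRpowMul_of_pos hx).trans Complex.real_smul⟩
end

section
/- For every complex-valued Schwartz function ψ on ℝ, the function Φ defined by Φ(λ) = ψ(λ − 1/λ) for λ > 0 and Φ(λ) = 0 for λ ≤ 0 is a Schwartz function on ℝ (vanishing at every λ ≤ 0). -/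
/-!
On `(0, ∞)` the derivatives of `l ↦ ψ (l - l⁻¹)` are finite linear combinations of terms
`l ^ m • φ (l - l⁻¹)` with `φ` Schwartz and `m ∈ ℤ`: this class is closed under differentiation,
since `φ'` is again Schwartz. Both `l` and `l⁻¹` are at most `1 + |l - l⁻¹|`, so each such term is
`O(l ^ k)` for every integer `k`, as `l → 0` as well as `l → ∞`. Vanishing faster than `l ^ 2` at
`0`, every derivative glues with zero to a differentiable function on `ℝ`, and the extension by
zero is smooth with rapidly decreasing derivatives.
-/

open Filter Topology Set Asymptotics
open scoped SchwartzMap ContDiff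

section Gluing

variable {E : Type*} [NormedAddCommGroup E] [NormedSpace ℝ E]

def rapidDecayOnIoi : Submodule ℝ (ℝ → E) where
  carrier := {f | ∀ k : ℤ, ∃ C, ∀ x > 0, x ^ k * ‖f x‖ ≤ C}
  zero_mem' _ := ⟨0, fun _ _ => by simp⟩
  add_mem' {f g} hf hg k := by
    obtain ⟨C, hC⟩ := hf k
    obtain ⟨D, hD⟩ := hg k
    refine ⟨C + D, fun x hx => ?_⟩
    calc x ^ k * ‖(f + g) x‖ ≤ x ^ k * ‖f x‖ + x ^ k * ‖g x‖ := by
          rw [← mul_add]; gcongr; exact norm_add_le _ _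
      _ ≤ C + D := add_le_add (hC x hx) (hD x hx)
  smul_mem' c f hf k := by
    obtain ⟨C, hC⟩ := hf k
    refine ⟨‖c‖ * C, fun x hx => ?_⟩
    rw [Pi.smul_apply, norm_smul, mul_left_comm]
    exact mul_le_mul_of_nonneg_left (hC x hx) (norm_nonneg c)

theorem hasDerivAt_indicator_Ioi_zero {f : ℝ → E} {C : ℝ} (hf : ∀ x > 0, ‖f x‖ ≤ C * x ^ 2) :
    HasDerivAt ((Ioi 0).indicator f) 0 0 := by
  have hC : 0 ≤ C := by simpa using (norm_nonneg _).trans (hf 1 one_pos)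
  have hsq : (Ioi 0).indicator f =O[𝓝 0] fun x : ℝ => x ^ 2 := by
    refine IsBigO.of_bound C (Eventually.of_forall fun x => ?_)
    by_cases hx : 0 < x
    · simpa [indicator_of_mem (show x ∈ Ioi 0 from hx)] using hf x hx
    · simp [indicator_of_notMem (show x ∉ Ioi 0 from hx)]; positivity
  rw [hasDerivAt_iff_isLittleO]
  simpa using hsq.trans_isLittleO (isLittleO_pow_id one_lt_two)

theorem hasDerivAt_indicator_Ioi {f f' : ℝ → E} {C : ℝ}
    (hf' : ∀ x > 0, HasDerivAt f (f' x) x) (hf : ∀ x > 0, ‖f x‖ ≤ C * x ^ 2) (x : ℝ) :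
    HasDerivAt ((Ioi 0).indicator f) ((Ioi 0).indicator f' x) x := by
  rcases lt_trichotomy x 0 with hx | rfl | hx
  · rw [indicator_of_notMem (show x ∉ Ioi 0 from hx.not_gt)]
    refine (hasDerivAt_const x 0).congr_of_eventuallyEq ?_
    filter_upwards [Iio_mem_nhds hx] with y hy
    exact indicator_of_notMem (show y ∉ Ioi 0 from (mem_Iio.1 hy).not_gt) f
  · simpa using hasDerivAt_indicator_Ioi_zero hf
  · rw [indicator_of_mem (show x ∈ Ioi 0 from hx)]
    refine (hf' x hx).congr_of_eventuallyEq ?_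
    filter_upwards [Ioi_mem_nhds hx] with y hy
    exact indicator_of_mem hy f

variable {P : (ℝ → E) → Prop}

theorem exists_hasDerivAt_indicator_Ioi
    (hderiv : ∀ f, P f → ∃ f', P f' ∧ ∀ x > 0, HasDerivAt f (f' x) x)
    (hdecay : ∀ f, P f → f ∈ rapidDecayOnIoi) {f : ℝ → E} (hf : P f) :
    ∃ f', P f' ∧ ∀ x, HasDerivAt ((Ioi 0).indicator f) ((Ioi 0).indicator f' x) x := by
  obtain ⟨f', hf'P, hf'⟩ := hderiv f hf
  obtain ⟨C, hC⟩ := hdecay f hf (-2)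
  refine ⟨f', hf'P, hasDerivAt_indicator_Ioi (C := C) hf' fun x hx => ?_⟩
  have := hC x hx
  rw [zpow_neg, zpow_ofNat, inv_mul_le_iff₀ (by positivity)] at this
  exact this.trans_eq (mul_comm _ _)

theorem exists_iteratedDeriv_indicator_Ioi
    (hderiv : ∀ f, P f → ∃ f', P f' ∧ ∀ x > 0, HasDerivAt f (f' x) x)
    (hdecay : ∀ f, P f → f ∈ rapidDecayOnIoi) {f : ℝ → E} (hf : P f) (n : ℕ) :
    ∃ g, P g ∧ iteratedDeriv n ((Ioi 0).indicator f) = (Ioi 0).indicator g := by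
  induction n with
  | zero => exact ⟨f, hf, iteratedDeriv_zero⟩
  | succ n ih =>
    obtain ⟨g, hgP, hg⟩ := ih
    obtain ⟨g', hg'P, hg'⟩ := exists_hasDerivAt_indicator_Ioi hderiv hdecay hgP
    refine ⟨g', hg'P, ?_⟩
    rw [iteratedDeriv_succ, hg]
    exact funext fun x => (hg' x).deriv

theorem exists_schwartzMap_eq_indicator_Ioi
    (hderiv : ∀ f, P f → ∃ f', P f' ∧ ∀ x > 0, HasDerivAt f (f' x) x)
    (hdecay : ∀ f, P f → f ∈ rapidDecayOnIoi) {f : ℝ → E} (hf : P f) :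
    ∃ Φ : 𝓢(ℝ, E), ⇑Φ = (Ioi 0).indicator f := by
  have smooth : ContDiff ℝ ∞ ((Ioi 0).indicator f) := by
    refine contDiff_of_differentiable_iteratedDeriv fun n _ => ?_
    obtain ⟨g, hgP, hg⟩ := exists_iteratedDeriv_indicator_Ioi hderiv hdecay hf n
    obtain ⟨g', -, hg'⟩ := exists_hasDerivAt_indicator_Ioi hderiv hdecay hgP
    exact hg ▸ fun x => (hg' x).differentiableAt
  have decay (k n : ℕ) :
      ∃ C, ∀ x : ℝ, ‖x‖ ^ k * ‖iteratedFDeriv ℝ n ((Ioi 0).indicator f) x‖ ≤ C := by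
    obtain ⟨g, hgP, hg⟩ := exists_iteratedDeriv_indicator_Ioi hderiv hdecay hf n
    obtain ⟨C, hC⟩ := hdecay g hgP k
    refine ⟨max C 0, fun x => ?_⟩
    rw [norm_iteratedFDeriv_eq_norm_iteratedDeriv, hg]
    by_cases hx : 0 < x
    · simpa [indicator_of_mem (show x ∈ Ioi 0 from hx), abs_of_pos hx] using
        (hC x hx).trans (le_max_left C 0)
    · simp [indicator_of_notMem (show x ∉ Ioi 0 from hx)]
  exact ⟨⟨_, smooth, decay⟩, rfl⟩

end Gluing

section Chart

variable {F : Type*} [NormedAddCommGroup F] [NormedSpace ℝ F]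

theorem self_le_one_add_abs_sub_inv (l : ℝ) : l ≤ 1 + |l - l⁻¹| := by
  rcases le_or_gt l 1 with h | h
  · linarith [abs_nonneg (l - l⁻¹)]
  · linarith [le_abs_self (l - l⁻¹), inv_lt_one_of_one_lt₀ h]

theorem zpow_le_one_add_abs_sub_inv_pow {l : ℝ} (hl : 0 < l) (k : ℤ) :
    l ^ k ≤ (1 + |l - l⁻¹|) ^ k.natAbs := by
  rcases Int.natAbs_eq k with hk | hk <;> rw [hk]
  · rw [zpow_natCast]
    exact pow_le_pow_left₀ hl.le (self_le_one_add_abs_sub_inv l) _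
  · rw [zpow_neg, zpow_natCast, ← inv_pow, Int.natAbs_neg, Int.natAbs_natCast]
    refine pow_le_pow_left₀ (inv_pos.2 hl).le ?_ _
    simpa [abs_sub_comm] using self_le_one_add_abs_sub_inv l⁻¹

noncomputable def chartTerm (φ : 𝓢(ℝ, F)) (m : ℤ) (l : ℝ) : F := l ^ m • φ (l - l⁻¹)

def chartTerms : Submodule ℝ (ℝ → F) :=
  Submodule.span ℝ (range fun p : 𝓢(ℝ, F) × ℤ => chartTerm p.1 p.2)

theorem chartTerm_mem_chartTerms (φ : 𝓢(ℝ, F)) (m : ℤ) : chartTerm φ m ∈ chartTerms :=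
  Submodule.subset_span ⟨(φ, m), rfl⟩

theorem hasDerivAt_chartTerm (φ : 𝓢(ℝ, F)) (m : ℤ) {l : ℝ} (hl : 0 < l) :
    HasDerivAt (chartTerm φ m)
      (chartTerm (SchwartzMap.derivCLM ℝ F φ) m l + chartTerm (SchwartzMap.derivCLM ℝ F φ) (m - 2) l
        + (m : ℝ) • chartTerm φ (m - 1) l) l := by
  have hσ : HasDerivAt (fun x : ℝ => x - x⁻¹) (1 - -(l ^ 2)⁻¹) l :=
    (hasDerivAt_id l).sub (hasDerivAt_inv hl.ne')
  have := (hasDerivAt_zpow m l (Or.inl hl.ne')).smul ((φ.hasDerivAt (l - l⁻¹)).scomp l hσ)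
  refine this.congr_deriv ?_
  simp only [chartTerm, Function.comp_apply, SchwartzMap.derivCLM_apply, zpow_sub₀ hl.ne',
    zpow_ofNat]
  module

theorem exists_hasDerivAt_of_mem_chartTerms {f : ℝ → F} (hf : f ∈ chartTerms) :
    ∃ f' ∈ chartTerms, ∀ l > 0, HasDerivAt f (f' l) l := by
  induction hf using Submodule.span_induction with
  | mem f hf =>
    obtain ⟨⟨φ, m⟩, rfl⟩ := hf
    let φ' := SchwartzMap.derivCLM ℝ F φ
    refine ⟨chartTerm φ' m + chartTerm φ' (m - 2) + (m : ℝ) • chartTerm φ (m - 1), ?_,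
      fun l hl => hasDerivAt_chartTerm φ m hl⟩
    exact add_mem (add_mem (chartTerm_mem_chartTerms _ _) (chartTerm_mem_chartTerms _ _))
      (Submodule.smul_mem _ _ (chartTerm_mem_chartTerms _ _))
  | zero => exact ⟨0, zero_mem _, fun l _ => hasDerivAt_const l 0⟩
  | add f g _ _ hf hg =>
    obtain ⟨f', hf'm, hf'⟩ := hf
    obtain ⟨g', hg'm, hg'⟩ := hg
    exact ⟨f' + g', add_mem hf'm hg'm, fun l hl => (hf' l hl).add (hg' l hl)⟩
  | smul c f _ hf =>
    obtain ⟨f', hf'm, hf'⟩ := hf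
    exact ⟨c • f', Submodule.smul_mem _ c hf'm, fun l hl => (hf' l hl).const_smul c⟩

theorem chartTerm_mem_rapidDecayOnIoi (φ : 𝓢(ℝ, F)) (m : ℤ) :
    chartTerm φ m ∈ rapidDecayOnIoi := by
  intro k
  set N := (k + m).natAbs
  refine ⟨2 ^ N * (Finset.Iic (N, 0)).sup (fun p => SchwartzMap.seminorm ℝ p.1 p.2) φ,
    fun l hl => ?_⟩
  have hφ := SchwartzMap.one_add_le_sup_seminorm_apply (𝕜 := ℝ) (m := (N, 0)) le_rfl le_rfl φ
    (l - l⁻¹)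
  rw [norm_iteratedFDeriv_zero, Real.norm_eq_abs] at hφ
  calc l ^ k * ‖chartTerm φ m l‖ = l ^ (k + m) * ‖φ (l - l⁻¹)‖ := by
        rw [chartTerm, norm_smul, Real.norm_eq_abs, abs_of_pos (zpow_pos hl m), zpow_add₀ hl.ne',
          mul_assoc]
    _ ≤ (1 + |l - l⁻¹|) ^ N * ‖φ (l - l⁻¹)‖ := by
        gcongr; exact zpow_le_one_add_abs_sub_inv_pow hl _
    _ ≤ _ := hφ

theorem chartTerms_le_rapidDecayOnIoi : (chartTerms : Submodule ℝ (ℝ → F)) ≤ rapidDecayOnIoi :=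
  Submodule.span_le.2 <| range_subset_iff.2 fun p => chartTerm_mem_rapidDecayOnIoi p.1 p.2

end Chart

/-- For any Schwartz function `ψ` on `ℝ`, the function `Φ` with
`Φ λ = ψ (λ - 1/λ)` for `λ > 0` and `Φ λ = 0` for `λ ≤ 0` is a Schwartz function on `ℝ`
vanishing at every `λ ≤ 0`. -/
theorem schwartz_comp_chart_of_schwartz (ψ : SchwartzMap ℝ ℂ) :
    ∃ Φ : SchwartzMap ℝ ℂ,
      (∀ l : ℝ, l ≤ 0 → Φ l = 0) ∧ ∀ l : ℝ, 0 < l → Φ l = ψ (l - 1 / l) := by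
  obtain ⟨Φ, hΦ⟩ := exists_schwartzMap_eq_indicator_Ioi
    (fun _ => exists_hasDerivAt_of_mem_chartTerms) (fun _ hf => chartTerms_le_rapidDecayOnIoi hf)
    (chartTerm_mem_chartTerms ψ 0)
  refine ⟨Φ, fun l hl => ?_, fun l hl => ?_⟩
  · simp [hΦ, indicator_of_notMem (show l ∉ Ioi 0 from hl.not_gt)]
  · simp [hΦ, indicator_of_mem (show l ∈ Ioi 0 from hl), chartTerm]
end

section
/- Let F be a complex Banach space, let 1 ≤ p < ∞, and let f : ℝ → F' (where F' is the space of continuous linear functionals on F) be strongly measurable with ∫_ℝ ‖f(y)‖^p dy < ∞. Then for every F-valued Schwartz function φ on ℝ, the translated pairings tend to zero at infinity: ∫_ℝ ⟨f(y), φ(y − x)⟩ dy → 0 as |x| → ∞. -/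
/-!
By Hölder's inequality and translation invariance of the measure, the translated pairing
`x ↦ ∫ ⟨f y, ψ (y - x)⟩ dy` of `f ∈ Lᵖ` with a fixed `ψ ∈ L^q` is bounded by `‖f‖ₚ ‖ψ‖_q`,
uniformly in `x`. For integrable `f` it vanishes at infinity by dominated convergence, because
`ψ` does. Compactly supported continuous functions are dense in `Lᵖ` for `p < ∞`, so for general
`f` the translated pairing is a uniform limit of functions vanishing at infinity.
-/

open MeasureTheory Filter Topology
open scoped ENNReal ZeroAtInfty

section TranslatedPairing

variable {α G 𝕜 E : Type*} [RCLike 𝕜] [NormedAddCommGroup E] [NormedSpace 𝕜 E]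

section Holder

variable [MeasurableSpace α] {μ : Measure α} {p q : ℝ≥0∞} [p.HolderConjugate q]
  {f : α → E →L[𝕜] 𝕜} {g : α → E}

theorem enorm_integral_apply_le_eLpNorm_mul_eLpNorm (hf : AEStronglyMeasurable f μ)
    (hg : AEStronglyMeasurable g μ) :
    ‖∫ a, f a (g a) ∂μ‖ₑ ≤ eLpNorm f p μ * eLpNorm g q μ :=
  calc ‖∫ a, f a (g a) ∂μ‖ₑ ≤ eLpNorm (fun a => f a (g a)) 1 μ :=
        (enorm_integral_le_lintegral_enorm _).trans_eq eLpNorm_one_eq_lintegral_enorm.symm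
    _ ≤ 1 * eLpNorm f p μ * eLpNorm g q μ :=
        eLpNorm_le_eLpNorm_mul_eLpNorm'_of_norm hf hg (fun L v => L v) 1
          (ae_of_all _ fun a => by simpa using (f a).le_opNorm (g a))
    _ = eLpNorm f p μ * eLpNorm g q μ := by rw [one_mul]

theorem MeasureTheory.MemLp.integrable_apply (hf : MemLp f p μ) (hg : MemLp g q μ) :
    Integrable (fun a => f a (g a)) μ :=
  memLp_one_iff_integrable.1 <| (ContinuousLinearMap.id 𝕜 (E →L[𝕜] 𝕜)).memLp_of_bilin 1 hf hg

end Holder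

theorem enorm_integral_apply_comp_sub_le [AddGroup G] [MeasurableSpace G] [MeasurableAdd G]
    {μ : Measure G} [μ.IsAddRightInvariant] {p q : ℝ≥0∞} [p.HolderConjugate q]
    {f : G → E →L[𝕜] 𝕜} {ψ : G → E} (hf : AEStronglyMeasurable f μ)
    (hψ : AEStronglyMeasurable ψ μ) (x : G) :
    ‖∫ y, f y (ψ (y - x)) ∂μ‖ₑ ≤ eLpNorm f p μ * eLpNorm ψ q μ := by
  have hτ := measurePreserving_sub_right μ x
  calc ‖∫ y, f y (ψ (y - x)) ∂μ‖ₑ ≤ eLpNorm f p μ * eLpNorm (ψ ∘ fun y => y - x) q μ :=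
        enorm_integral_apply_le_eLpNorm_mul_eLpNorm hf (hψ.comp_measurePreserving hτ)
    _ = eLpNorm f p μ * eLpNorm ψ q μ := by rw [eLpNorm_comp_measurePreserving hψ hτ]

section Cocompact

variable [NormedAddCommGroup G] [ProperSpace G] [MeasurableSpace G] [BorelSpace G]
  {μ : Measure G} {f : G → E →L[𝕜] 𝕜}

theorem MeasureTheory.Integrable.tendsto_integral_apply_comp_sub_cocompact (hf : Integrable f μ)
    (ψ : C₀(G, E)) :
    Tendsto (fun x => ∫ y, f y (ψ (y - x)) ∂μ) (cocompact G) (𝓝 0) := by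
  have : (cocompact G).IsCountablyGenerated := by
    rw [← Metric.cobounded_eq_cocompact, ← comap_norm_atTop]; infer_instance
  have hlim : ∀ y, Tendsto (fun x => f y (ψ (y - x))) (cocompact G) (𝓝 0) := fun y =>
    ((f y).continuous.tendsto' 0 0 (map_zero _)).comp
      ((zero_at_infty ψ).comp (Homeomorph.subLeft y).isClosedEmbedding.tendsto_cocompact)
  simpa using tendsto_integral_filter_of_dominated_convergence (fun y => ‖f y‖ * ‖ψ‖)
    (Eventually.of_forall fun x => (ContinuousLinearMap.id 𝕜 _).aestronglyMeasurable_comp₂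
      hf.aestronglyMeasurable (ψ.continuous.comp (continuous_sub_right x)).aestronglyMeasurable)
    (Eventually.of_forall fun x => ae_of_all _ fun y => ((f y).le_opNorm _).trans
      (mul_le_mul_of_nonneg_left (ψ.toBCF.norm_coe_le_norm _) (norm_nonneg _)))
    (hf.norm.mul_const _) (ae_of_all _ hlim)

theorem MeasureTheory.MemLp.tendsto_integral_apply_comp_sub_cocompact [μ.IsAddRightInvariant]
    [μ.Regular] {p q : ℝ≥0∞} [p.HolderConjugate q] (hp : p ≠ ∞) (hf : MemLp f p μ) (ψ : C₀(G, E))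
    (hψ : MemLp ψ q μ) :
    Tendsto (fun x => ∫ y, f y (ψ (y - x)) ∂μ) (cocompact G) (𝓝 0) := by
  choose g hg_supp hg_approx hg_cont hg_mem using fun n : ℕ =>
    hf.exists_hasCompactSupport_eLpNorm_sub_le hp
      (ENNReal.inv_ne_zero.2 (ENNReal.natCast_ne_top n))
  have hψτ : ∀ x, MemLp (fun y => ψ (y - x)) q μ := fun x =>
    hψ.comp_measurePreserving (measurePreserving_sub_right μ x)
  have huniform : TendstoUniformly (fun n x => ∫ y, g n y (ψ (y - x)) ∂μ)
      (fun x => ∫ y, f y (ψ (y - x)) ∂μ) atTop := by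
    rw [EMetric.tendstoUniformly_iff]
    intro ε hε
    have hlim : Tendsto (fun n : ℕ => (n : ℝ≥0∞)⁻¹ * eLpNorm ψ q μ) atTop (𝓝 0) := by
      simpa using ENNReal.Tendsto.mul_const ENNReal.tendsto_inv_nat_nhds_zero
        (Or.inr hψ.eLpNorm_ne_top)
    filter_upwards [hlim.eventually_lt_const hε] with n hn x
    rw [edist_eq_enorm_sub, ← integral_sub (hf.integrable_apply (hψτ x))
      ((hg_mem n).integrable_apply (hψτ x))]
    calc ‖∫ y, (f - g n) y (ψ (y - x)) ∂μ‖ₑ ≤ eLpNorm (f - g n) p μ * eLpNorm ψ q μ :=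
          enorm_integral_apply_comp_sub_le (hf.sub (hg_mem n)).aestronglyMeasurable hψ.1 x
      _ ≤ (n : ℝ≥0∞)⁻¹ * eLpNorm ψ q μ := by gcongr; exact hg_approx n
      _ < ε := hn
  have hg_int : ∀ n, Integrable (g n) μ := fun n =>
    (hg_cont n).integrable_of_hasCompactSupport (hg_supp n)
  exact huniform.tendsto_of_eventually_tendsto
    (Eventually.of_forall fun n => (hg_int n).tendsto_integral_apply_comp_sub_cocompact ψ)
    tendsto_const_nhds

end Cocompact

end TranslatedPairing

theorem lp_dual_pairing_translate_tendsto_zero_general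
    (F : Type*) [NormedAddCommGroup F] [NormedSpace ℂ F]
    (p : ℝ) (hp : 1 ≤ p) (f : ℝ → F →L[ℂ] ℂ)
    (hmeas : StronglyMeasurable f)
    (hint : Integrable (fun y : ℝ => ‖f y‖ ^ p) volume)
    (φ : SchwartzMap ℝ F) :
    Tendsto (fun x : ℝ => ∫ y : ℝ, f y (φ (y - x))) (cocompact ℝ) (nhds 0) := by
  have hp₁ : 1 ≤ ENNReal.ofReal p := by simpa using ENNReal.ofReal_le_ofReal hp
  have := ENNReal.HolderConjugate.conjExponent hp₁
  have hf : MemLp f (ENNReal.ofReal p) volume := by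
    refine (integrable_norm_rpow_iff hmeas.aestronglyMeasurable
      (zero_lt_one.trans_le hp₁).ne' ENNReal.ofReal_ne_top).1 ?_
    rwa [ENNReal.toReal_ofReal (zero_le_one.trans hp)]
  have hφ : MemLp φ.toZeroAtInfty (ENNReal.ofReal p).conjExponent volume := φ.memLp _ volume
  exact hf.tendsto_integral_apply_comp_sub_cocompact ENNReal.ofReal_ne_top φ.toZeroAtInfty hφ

/-- Let `F` be a complex Banach space, `1 ≤ p < ∞`, and `f : ℝ → F'` strongly
measurable with `∫ ‖f y‖^p dy < ∞`. Then for every `F`-valued Schwartz function `φ`,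
`∫ ⟨f y, φ (y − x)⟩ dy → 0` as `|x| → ∞`. -/
theorem lp_dual_pairing_translate_tendsto_zero
    (F : Type*) [NormedAddCommGroup F] [NormedSpace ℂ F] [CompleteSpace F]
    (p : ℝ) (hp : 1 ≤ p) (f : ℝ → F →L[ℂ] ℂ)
    (hmeas : StronglyMeasurable f)
    (hint : Integrable (fun y : ℝ => ‖f y‖ ^ p) volume)
    (φ : SchwartzMap ℝ F) :
    Tendsto (fun x : ℝ => ∫ y : ℝ, f y (φ (y - x))) (cocompact ℝ) (nhds 0) :=
  lp_dual_pairing_translate_tendsto_zero_general F p hp f hmeas hint φ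
end

section
/- Let F be a complex Banach space, let 1 ≤ p ≤ ∞, and let f : ℝ → F' be strongly measurable with finite L^p norm (for p = ∞ this means essentially bounded). Then for every F-valued Schwartz function φ on ℝ, the dilated pairings tend to zero: ∫_ℝ ⟨f(y), φ(y/λ)⟩ dy → 0 as λ → 0 through λ ≠ 0. -/
open MeasureTheory Filter ENNReal

open Module (finrank)

/-! Dominated convergence: for `0 < |λ| ≤ 1` we have `|y| ≤ |y / λ|`, so the Schwartz decay
`‖φ x‖ ≤ C (1 + |x|)⁻²` gives `|⟨f y, φ (y / λ)⟩| ≤ C ‖f y‖ (1 + |y|)⁻²`, which is integrable by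
Hölder since `(1 + |y|)⁻²` lies in every `L^q`, `q ≥ 1`. Pointwise, `y / λ → ∞` for `y ≠ 0`, where
`φ` vanishes. -/

theorem memLp_one_add_norm_rpow_neg {E : Type*} [NormedAddCommGroup E] [NormedSpace ℝ E]
    [FiniteDimensional ℝ E] [MeasurableSpace E] [BorelSpace E] {μ : Measure E}
    [μ.IsAddHaarMeasure] {r : ℝ} (hr : (finrank ℝ E : ℝ) < r) {q : ℝ≥0∞} (hq : 1 ≤ q) :
    MemLp (fun x : E ↦ (1 + ‖x‖) ^ (-r)) q μ := by
  have hr₀ : 0 ≤ r := (Nat.cast_nonneg _).trans hr.le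
  have hmeas : AEStronglyMeasurable (fun x : E ↦ (1 + ‖x‖) ^ (-r)) μ :=
    (by fun_prop : Measurable fun x : E ↦ (1 + ‖x‖) ^ (-r)).aestronglyMeasurable
  rcases eq_or_ne q ∞ with rfl | hq_top
  · refine memLp_top_of_bound hmeas 1 (Eventually.of_forall fun x ↦ ?_)
    rw [Real.norm_of_nonneg (by positivity)]
    exact Real.rpow_le_one_of_one_le_of_nonpos (by simp) (neg_nonpos.mpr hr₀)
  · have hq_real : 1 ≤ q.toReal := by
      simpa using ENNReal.toReal_mono hq_top hq
    rw [← integrable_norm_rpow_iff hmeas (by positivity) hq_top]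
    refine (integrable_one_add_norm (μ := μ) (r := r * q.toReal) (by nlinarith)).congr
      (Eventually.of_forall fun x ↦ ?_)
    dsimp only
    rw [Real.norm_of_nonneg (by positivity), ← Real.rpow_mul (by positivity), neg_mul]

theorem SchwartzMap.exists_norm_le_mul_one_add_norm_rpow_neg {E F : Type*}
    [NormedAddCommGroup E] [NormedSpace ℝ E] [NormedAddCommGroup F] [NormedSpace ℝ F]
    (φ : SchwartzMap E F) (k : ℕ) :
    ∃ C, 0 ≤ C ∧ ∀ x, ‖φ x‖ ≤ C * (1 + ‖x‖) ^ (-(k : ℝ)) := by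
  refine ⟨2 ^ k * (Finset.Iic (k, 0)).sup (fun m ↦ SchwartzMap.seminorm ℝ m.1 m.2) φ,
    by positivity, fun x ↦ ?_⟩
  have h := SchwartzMap.one_add_le_sup_seminorm_apply (𝕜 := ℝ) (m := (k, 0)) le_rfl le_rfl φ x
  rw [norm_iteratedFDeriv_zero] at h
  rw [Real.rpow_neg (by positivity), Real.rpow_natCast, ← div_eq_mul_inv,
    le_div_iff₀ (by positivity), mul_comm]
  exact h

theorem norm_le_norm_div_of_norm_le_one {𝕜 : Type*} [NormedDivisionRing 𝕜] (y : 𝕜) {t : 𝕜}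
    (ht₀ : t ≠ 0) (ht₁ : ‖t‖ ≤ 1) : ‖y‖ ≤ ‖y / t‖ := by
  rw [norm_div]
  exact le_div_self (norm_nonneg y) (norm_pos_iff.mpr ht₀) ht₁

theorem tendsto_div_nhdsNE_zero_cobounded {𝕜 : Type*} [NormedDivisionRing 𝕜] {y : 𝕜}
    (hy : y ≠ 0) : Tendsto (fun t : 𝕜 ↦ y / t) (nhdsWithin 0 {0}ᶜ) (Bornology.cobounded 𝕜) := by
  simp_rw [div_eq_mul_inv]
  exact (tendsto_mul_left_cobounded hy).comp tendsto_inv₀_nhdsNE_zero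

theorem tendsto_integral_apply_of_memLp_of_dominated {α ι 𝕜 F G : Type*} [MeasurableSpace α]
    {μ : Measure α} {l : Filter ι} [l.IsCountablyGenerated] [NontriviallyNormedField 𝕜]
    [NormedAddCommGroup F] [NormedSpace 𝕜 F] [NormedAddCommGroup G] [NormedSpace 𝕜 G]
    [NormedSpace ℝ G] {p q : ℝ≥0∞} [p.HolderConjugate q] {f : α → F →L[𝕜] G}
    (hf : MemLp f p μ) {g : α → ℝ} (hg : MemLp g q μ) {ψ : ι → α → F}
    (hψ_meas : ∀ᶠ i in l, AEStronglyMeasurable (ψ i) μ)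
    (hψ_le : ∀ᶠ i in l, ∀ᵐ x ∂μ, ‖ψ i x‖ ≤ g x)
    (hψ_lim : ∀ᵐ x ∂μ, Tendsto (fun i ↦ ψ i x) l (nhds 0)) :
    Tendsto (fun i ↦ ∫ x, f x (ψ i x) ∂μ) l (nhds 0) := by
  have h := tendsto_integral_filter_of_dominated_convergence (fun x ↦ ‖f x‖ * g x)
    (hψ_meas.mono fun i hi ↦
      (ContinuousLinearMap.id 𝕜 (F →L[𝕜] G)).aestronglyMeasurable_comp₂ hf.1 hi)
    (hψ_le.mono fun i hi ↦ hi.mono fun x hx ↦ (f x).le_of_opNorm_le_of_le le_rfl hx)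
    (hf.norm.integrable_mul hg)
    (hψ_lim.mono fun x hx ↦ ((f x).continuous.tendsto' 0 0 (map_zero _)).comp hx)
  simpa using h

theorem lp_dual_pairing_dilate_tendsto_zero_general
    (F : Type*) [NormedAddCommGroup F] [NormedSpace ℂ F]
    (p : ℝ≥0∞) (hp : 1 ≤ p) (f : ℝ → F →L[ℂ] ℂ)
    (hf : MemLp f p volume)
    (φ : SchwartzMap ℝ F) :
    Tendsto (fun lam : ℝ => ∫ y : ℝ, f y (φ (y / lam)))
      (nhdsWithin (0 : ℝ) {0}ᶜ) (nhds 0) := by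
  have := ENNReal.HolderConjugate.conjExponent hp
  obtain ⟨C, hC, hφ⟩ := φ.exists_norm_le_mul_one_add_norm_rpow_neg 2
  have hg : MemLp (fun y : ℝ ↦ C * (1 + ‖y‖) ^ (-((2 : ℕ) : ℝ))) p.conjExponent volume :=
    (memLp_one_add_norm_rpow_neg (by norm_num) (HolderConjugate.one_le _ p)).const_mul C
  refine tendsto_integral_apply_of_memLp_of_dominated hf hg
    (Eventually.of_forall fun lam ↦
      (φ.continuous.comp (continuous_id.div_const lam)).aestronglyMeasurable) ?_ ?_
  · filter_upwards [self_mem_nhdsWithin,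
      nhdsWithin_le_nhds (Metric.closedBall_mem_nhds (0 : ℝ) one_pos)] with lam hlam₀ hlam₁
    refine Eventually.of_forall fun y ↦ (hφ _).trans ?_
    refine mul_le_mul_of_nonneg_left
      (Real.rpow_le_rpow_of_nonpos (by positivity) ?_ (by norm_num)) hC
    gcongr
    exact norm_le_norm_div_of_norm_le_one y hlam₀ (mem_closedBall_zero_iff.mp hlam₁)
  · filter_upwards [compl_mem_ae_iff.mpr (Real.volume_singleton (a := 0))] with y hy
    have hdiv := tendsto_div_nhdsNE_zero_cobounded hy
    rw [Metric.cobounded_eq_cocompact] at hdiv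
    exact φ.tendsto_cocompact.comp hdiv

/-- Let `F` be a complex Banach space, `1 ≤ p ≤ ∞`, and `f : ℝ → F'` strongly
measurable with finite `L^p` norm. Then for every `F`-valued Schwartz function `φ`,
`∫ ⟨f y, φ (y/λ)⟩ dy → 0` as `λ → 0` through `λ ≠ 0`. -/
theorem lp_dual_pairing_dilate_tendsto_zero
    (F : Type*) [NormedAddCommGroup F] [NormedSpace ℂ F] [CompleteSpace F]
    (p : ℝ≥0∞) (hp : 1 ≤ p) (f : ℝ → F →L[ℂ] ℂ)
    (hmeas : StronglyMeasurable f)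
    (hf : MemLp f p volume)
    (φ : SchwartzMap ℝ F) :
    Tendsto (fun lam : ℝ => ∫ y : ℝ, f y (φ (y / lam)))
      (nhdsWithin (0 : ℝ) {0}ᶜ) (nhds 0) :=
  lp_dual_pairing_dilate_tendsto_zero_general F p hp f hf φ
end

section
/- Let p : ℝ → ℂ be a polynomial function. If for every complex-valued Schwartz function φ on ℝ the translated pairings tend to zero at infinity, i.e. ∫_ℝ p(y) φ(y − x) dy → 0 as |x| → ∞, then p is identically zero. -/
open MeasureTheory Filter

/-- A fixed smooth bump function centered at `0`. -/
noncomputable def myBump : ContDiffBump (0 : ℝ) := ⟨1, 2, one_pos, one_lt_two⟩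

/-- The bump function, viewed as a complex-valued Schwartz function. -/
noncomputable def bumpSchwartz : SchwartzMap ℝ ℂ where
  toFun := fun x => (myBump x : ℂ)
  smooth' := Complex.ofRealCLM.contDiff.comp myBump.contDiff
  decay' := by
    intro k n
    have hF : ContDiff ℝ ((⊤ : ℕ∞) : WithTop ℕ∞) (fun x : ℝ => (myBump x : ℂ)) :=
      Complex.ofRealCLM.contDiff.comp myBump.contDiff
    have hsupp : HasCompactSupport (fun x : ℝ => (myBump x : ℂ)) := by
      refine myBump.hasCompactSupport.mono fun x hx => ?_
      simp only [Function.mem_support] at hx ⊢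
      intro h0
      exact hx (by rw [h0, Complex.ofReal_zero])
    have hsupp' := (hsupp.iteratedFDeriv (𝕜 := ℝ) n).norm
    have hcont : Continuous fun x : ℝ =>
        ‖x‖ ^ k * ‖iteratedFDeriv ℝ n (fun x : ℝ => (myBump x : ℂ)) x‖ :=
      (continuous_norm.pow k).mul (hF.continuous_iteratedFDeriv (mod_cast le_top)).norm
    have hg : HasCompactSupport fun x : ℝ =>
        ‖x‖ ^ k * ‖iteratedFDeriv ℝ n (fun x : ℝ => (myBump x : ℂ)) x‖ := by
      apply hsupp'.mul_left
    obtain ⟨C, hC⟩ := hg.exists_bound_of_continuous hcont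
    exact ⟨C, fun x => (le_abs_self _).trans ((Real.norm_eq_abs _ ▸ hC x))⟩

lemma bumpSchwartz_apply (x : ℝ) : bumpSchwartz x = (myBump x : ℂ) := rfl

/-- A complex polynomial whose evaluations along the real axis tend to `0` at `+∞`
is the zero polynomial. -/
lemma poly_eval_real_tendsto_zero (G : Polynomial ℂ)
    (hG : Tendsto (fun x : ℝ => G.eval (x : ℂ)) atTop (nhds 0)) : G = 0 := by
  by_contra hne
  set d := G.natDegree with hd
  have h1 : Tendsto (fun x : ℝ => G.eval (x : ℂ) / (x : ℂ) ^ d) atTop (nhds (G.coeff d)) := by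
    have heq : ∀ x : ℝ, G.eval (x : ℂ) / (x : ℂ) ^ d
        = ∑ k ∈ Finset.range (d + 1), G.coeff k * (x : ℂ) ^ k / (x : ℂ) ^ d := by
      intro x
      rw [Polynomial.eval_eq_sum_range, Finset.sum_div]
    simp only [heq]
    have hsum : (G.coeff d) = ∑ k ∈ Finset.range (d + 1),
        if k = d then G.coeff d else 0 := by simp
    rw [hsum]
    refine tendsto_finset_sum _ fun k hk => ?_
    rcases eq_or_lt_of_le (Nat.lt_succ_iff.mp (Finset.mem_range.mp hk)) with hkd | hkd
    · rw [if_pos hkd, hkd]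
      have hev : ∀ᶠ x : ℝ in atTop,
          G.coeff d * (x : ℂ) ^ d / (x : ℂ) ^ d = G.coeff d := by
        filter_upwards [eventually_ge_atTop 1] with x hx
        have hx0 : (x : ℂ) ≠ 0 := by
          exact_mod_cast (by linarith : x ≠ 0)
        field_simp
      exact tendsto_const_nhds.congr' (hev.mono fun x hx => hx.symm)
    · simp only [if_neg hkd.ne]
      have h0 : Tendsto (fun x : ℝ => ((x ^ k / x ^ d : ℝ) : ℂ)) atTop (nhds 0) := by
        rw [show ((0 : ℂ)) = ((0 : ℝ) : ℂ) by simp]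
        exact (Complex.continuous_ofReal.tendsto 0).comp (tendsto_pow_div_pow_atTop_zero hkd)
      have h0' := h0.const_mul (G.coeff k)
      rw [mul_zero] at h0'
      refine h0'.congr fun x => ?_
      push_cast
      ring
  have h2 : Tendsto (fun x : ℝ => G.eval (x : ℂ) / (x : ℂ) ^ d) atTop (nhds 0) := by
    rw [tendsto_zero_iff_norm_tendsto_zero]
    apply squeeze_zero' (Eventually.of_forall fun x => norm_nonneg _)
      ?_ (tendsto_zero_iff_norm_tendsto_zero.mp hG)
    filter_upwards [eventually_ge_atTop 1] with x hx
    rw [norm_div]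
    refine div_le_self (norm_nonneg _) ?_
    rw [norm_pow]
    refine one_le_pow₀ ?_
    rw [Complex.norm_real, Real.norm_eq_abs]
    exact le_trans hx (le_abs_self x)
  have hcd : G.coeff d = 0 := tendsto_nhds_unique h1 h2
  exact Polynomial.leadingCoeff_ne_zero.mpr hne hcd

/-- A polynomial `p` such that `∫ p(y) φ(y − x) dy → 0` as `|x| → ∞` for every
Schwartz function `φ` is identically zero. -/
theorem polynomial_translate_pairing_decay_implies_zero (p : Polynomial ℂ)
    (h : ∀ φ : SchwartzMap ℝ ℂ,
      Tendsto (fun x : ℝ => ∫ y : ℝ, p.eval (y : ℂ) * φ (y - x)) (cocompact ℝ) (nhds 0)) :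
    p = 0 := by
  by_contra hp
  set n := p.natDegree with hn
  set φ := bumpSchwartz with hφ
  -- integrability of monomials times the Schwartz function
  have hφint : ∀ j : ℕ, Integrable (fun z : ℝ => (z : ℂ) ^ j * φ z) := by
    intro j
    refine (φ.integrable_pow_mul volume j).mono' ?_ ?_
    · exact ((Complex.continuous_ofReal.pow j).mul φ.continuous).aestronglyMeasurable
    · refine Eventually.of_forall fun z => ?_
      rw [norm_mul, norm_pow, Complex.norm_real]
  set m : ℕ → ℂ := fun j => ∫ z : ℝ, (z : ℂ) ^ j * φ z with hm
  set G : Polynomial ℂ :=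
    ∑ j ∈ Finset.range (n + 1), Polynomial.C (m j) * Polynomial.hasseDeriv j p with hG
  -- the pairing equals the evaluation of `G`
  have key : ∀ x : ℝ, (∫ y : ℝ, p.eval (y : ℂ) * φ (y - x)) = G.eval (x : ℂ) := by
    intro x
    have h1 : (∫ y : ℝ, p.eval (y : ℂ) * φ (y - x))
        = ∫ z : ℝ, p.eval ((z : ℂ) + (x : ℂ)) * φ z := by
      rw [← integral_sub_right_eq_self (fun z : ℝ => p.eval ((z : ℂ) + (x : ℂ)) * φ z) x]
      congr 1
      ext y
      simp only [Complex.ofReal_sub, sub_add_cancel]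
    have h2 : ∀ z : ℝ, p.eval ((z : ℂ) + (x : ℂ))
        = ∑ j ∈ Finset.range (n + 1),
            (Polynomial.hasseDeriv j p).eval (x : ℂ) * (z : ℂ) ^ j := by
      intro z
      rw [← Polynomial.taylor_eval (x : ℂ) p (z : ℂ),
        Polynomial.eval_eq_sum_range' (n := n + 1)
          (by rw [Polynomial.natDegree_taylor]; omega)]
      exact Finset.sum_congr rfl fun j _ => by rw [Polynomial.taylor_coeff]
    rw [h1]
    have h3 : (∫ z : ℝ, p.eval ((z : ℂ) + (x : ℂ)) * φ z)
        = ∫ z : ℝ, ∑ j ∈ Finset.range (n + 1),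
            (Polynomial.hasseDeriv j p).eval (x : ℂ) * ((z : ℂ) ^ j * φ z) := by
      congr 1
      ext z
      rw [h2 z, Finset.sum_mul]
      exact Finset.sum_congr rfl fun j _ => mul_assoc _ _ _
    rw [h3, integral_finset_sum _ fun j _ => (hφint j).const_mul _]
    have h4 : ∀ j ∈ Finset.range (n + 1),
        (∫ z : ℝ, (Polynomial.hasseDeriv j p).eval (x : ℂ) * ((z : ℂ) ^ j * φ z))
          = (Polynomial.hasseDeriv j p).eval (x : ℂ) * m j := by
      intro j _
      rw [integral_const_mul]
    rw [Finset.sum_congr rfl h4, hG]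
    rw [Polynomial.eval_finset_sum]
    exact Finset.sum_congr rfl fun j _ => by
      rw [Polynomial.eval_mul, Polynomial.eval_C]; ring
  -- `G` evaluates to something tending to zero at `+∞`, hence `G = 0`
  have hAt : Tendsto (fun x : ℝ => G.eval (x : ℂ)) atTop (nhds 0) := by
    have hle : (atTop : Filter ℝ) ≤ cocompact ℝ := by
      rw [cocompact_eq_atBot_atTop]
      exact le_sup_right
    exact ((h φ).mono_left hle).congr key
  have hG0 : G = 0 := poly_eval_real_tendsto_zero G hAt
  -- extract the top coefficient
  have hc : G.coeff n = m 0 * p.coeff n := by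
    rw [hG, Polynomial.finset_sum_coeff]
    rw [Finset.sum_eq_single 0]
    · rw [Polynomial.coeff_C_mul, Polynomial.hasseDeriv_zero]
      rfl
    · intro j _ hj0
      rw [Polynomial.coeff_C_mul, Polynomial.hasseDeriv_coeff]
      have hz : p.coeff (n + j) = 0 :=
        Polynomial.coeff_eq_zero_of_natDegree_lt (by omega)
      simp [hz]
    · intro h0
      exact absurd (Finset.mem_range.mpr (by omega)) h0
  have hm0 : m 0 ≠ 0 := by
    have h5 : m 0 = ∫ z : ℝ, Complex.ofReal (myBump z) := by
      have hfun : (fun z : ℝ => (z : ℂ) ^ 0 * φ z)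
          = fun z : ℝ => Complex.ofReal (myBump z) := by
        funext z
        rw [pow_zero, one_mul]
        rfl
      rw [hm]
      exact congrArg (fun f : ℝ → ℂ => ∫ z : ℝ, f z) hfun
    have hval : m 0 = Complex.ofReal (∫ z : ℝ, myBump z) := by
      rw [h5]
      exact integral_ofReal
    rw [hval, Ne, Complex.ofReal_eq_zero]
    exact (myBump.integral_pos (μ := volume)).ne'
  have hpc : p.coeff n ≠ 0 := Polynomial.leadingCoeff_ne_zero.mpr hp
  rw [hG0] at hc
  simp only [Polynomial.coeff_zero] at hc
  exact hpc (by
    rcases mul_eq_zero.mp hc.symm with h' | h'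
    · exact absurd h' hm0
    · exact h')
end

section
/- Let (c_k)_{k∈ℕ} be a sequence of complex numbers such that for every complex-valued Schwartz function φ on ℝ the partial sums Σ_{k=0}^{N} c_k · φ^{(k)}(0) converge in ℂ as N → ∞. Then only finitely many of the c_k are nonzero. -/
/-!
If infinitely many `c k` were nonzero, pick `k j > j` with `c (k j) ≠ 0` and take
`φ = ∑ⱼ mⱼ^(-j) ψ_{mⱼ}` with `ψ_m x = exp (i m x - x² / 2)` and `mⱼ = max 2 ‖c (k j)‖⁻¹`.
Since `ψ_m⁽ⁿ⁾ x = iⁿ Pₙ(m + i x) ψ_m x` for a polynomial `Pₙ` with nonnegative coefficients and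
leading term `Xⁿ`, the `n`-th derivatives at `0` of all summands lie on the ray `iⁿ ℝ≥0`, so
`‖φ⁽ᵏʲ⁾ 0‖ ≥ mⱼ^(kⱼ - j) ≥ ‖c (k j)‖⁻¹` and the terms of the convergent series do not tend to `0`.
The Schwartz seminorms of `ψ_m` grow only like `mⁿ`, so the weights `mⱼ^(-j)` make the series
converge in every seminorm.
-/

open Filter Polynomial Complex
open scoped ContDiff SchwartzMap

namespace Polynomial

variable {p : ℝ[X]}

theorem coeff_mul_pow_le_eval (hp : ∀ i, 0 ≤ p.coeff i) {y : ℝ} (hy : 0 ≤ y) (n : ℕ) :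
    p.coeff n * y ^ n ≤ p.eval y := by
  rw [eval_eq_sum_range' (Nat.lt_succ_of_le (le_max_left p.natDegree n))]
  exact Finset.single_le_sum (f := fun i => p.coeff i * y ^ i)
    (fun i _ => mul_nonneg (hp i) (pow_nonneg hy i))
    (Finset.mem_range.mpr (Nat.lt_succ_of_le (le_max_right _ _)))

theorem eval_nonneg_of_coeff_nonneg (hp : ∀ i, 0 ≤ p.coeff i) {y : ℝ} (hy : 0 ≤ y) :
    0 ≤ p.eval y :=
  (by simpa using hp 0 : 0 ≤ p.coeff 0 * y ^ 0).trans (coeff_mul_pow_le_eval hp hy 0)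

theorem norm_aeval_le_eval_one_mul_pow (hp : ∀ i, 0 ≤ p.coeff i) {A : Type*} [NormedRing A]
    [NormedAlgebra ℝ A] [NormOneClass A] (z : A) :
    ‖aeval z p‖ ≤ p.eval 1 * (1 + ‖z‖) ^ p.natDegree := by
  rw [aeval_eq_sum_range, eval_eq_sum_range, Finset.sum_mul]
  refine (norm_sum_le _ _).trans (Finset.sum_le_sum fun i hi => ?_)
  rw [norm_smul, Real.norm_of_nonneg (hp i), one_pow, mul_one]
  refine mul_le_mul_of_nonneg_left ?_ (hp i)
  calc ‖z ^ i‖ ≤ ‖z‖ ^ i := norm_pow_le z i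
    _ ≤ (1 + ‖z‖) ^ i := by gcongr; linarith
    _ ≤ (1 + ‖z‖) ^ p.natDegree :=
      pow_le_pow_right₀ (by linarith [norm_nonneg z]) (Nat.lt_succ_iff.mp (Finset.mem_range.mp hi))

end Polynomial

/-- The polynomial `Pₙ` with `(d/dx)ⁿ modGaussian m x = iⁿ Pₙ(m + i x) modGaussian m x`. -/
noncomputable def modGaussianPoly : ℕ → ℝ[X]
  | 0 => 1
  | n + 1 => derivative (modGaussianPoly n) + X * modGaussianPoly n

theorem modGaussianPoly_coeff_nonneg (n i : ℕ) : 0 ≤ (modGaussianPoly n).coeff i := by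
  induction n generalizing i with
  | zero => rw [modGaussianPoly, coeff_one]; split_ifs <;> norm_num
  | succ n ih =>
    rw [modGaussianPoly, coeff_add, coeff_derivative]
    rcases i with _ | i
    · simpa using mul_nonneg (ih 1) zero_le_one
    · rw [coeff_X_mul]
      have := ih (i + 2)
      have := ih i
      positivity

theorem modGaussianPoly_natDegree_le (n : ℕ) : (modGaussianPoly n).natDegree ≤ n := by
  induction n with
  | zero => simp [modGaussianPoly]
  | succ n ih =>
    rw [modGaussianPoly]
    refine (natDegree_add_le _ _).trans (max_le ((natDegree_derivative_le _).trans (by omega)) ?_)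
    exact natDegree_mul_le.trans (by rw [natDegree_X]; omega)

theorem modGaussianPoly_coeff_self (n : ℕ) : (modGaussianPoly n).coeff n = 1 := by
  induction n with
  | zero => simp [modGaussianPoly]
  | succ n ih =>
    rw [modGaussianPoly, coeff_add, coeff_X_mul, ih, add_eq_right]
    refine coeff_eq_zero_of_natDegree_lt ((natDegree_derivative_le _).trans_lt ?_)
    have := modGaussianPoly_natDegree_le n
    omega

theorem pow_le_eval_modGaussianPoly (n : ℕ) {y : ℝ} (hy : 0 ≤ y) :
    y ^ n ≤ (modGaussianPoly n).eval y := by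
  simpa [modGaussianPoly_coeff_self] using
    coeff_mul_pow_le_eval (modGaussianPoly_coeff_nonneg n) hy n

noncomputable def modGaussian (m x : ℝ) : ℂ := exp (I * m * x - x ^ 2 / 2)

theorem hasDerivAt_modGaussian (m x : ℝ) :
    HasDerivAt (modGaussian m) (I * (m + I * x) * modGaussian m x) x := by
  have hu : HasDerivAt (fun z : ℂ => I * m * z - z ^ 2 / 2) (I * m - x) x := by
    have hlin : HasDerivAt (fun z : ℂ => I * m * z) (I * m) x := by
      simpa using (hasDerivAt_id (x : ℂ)).const_mul (I * m)
    have hsq : HasDerivAt (fun z : ℂ => z ^ 2 / 2) (x : ℂ) x := by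
      simpa using (hasDerivAt_pow 2 (x : ℂ)).div_const 2
    exact hlin.sub hsq
  refine hu.cexp.comp_ofReal.congr_deriv ?_
  rw [modGaussian, mul_comm, mul_add, ← mul_assoc, I_mul_I]
  ring

theorem contDiff_modGaussian (m : ℝ) : ContDiff ℝ ∞ (modGaussian m) :=
  contDiff_exp.comp ((contDiff_const.mul ofRealCLM.contDiff).sub
    ((ofRealCLM.contDiff.pow 2).div_const 2))

theorem norm_modGaussian (m x : ℝ) : ‖modGaussian m x‖ = Real.exp (-(x ^ 2 / 2)) := by
  rw [modGaussian, norm_exp]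
  congr 1
  simp [← ofReal_pow]

theorem hasDerivAt_aeval_ofReal_add_I_mul (p : ℝ[X]) (m x : ℝ) :
    HasDerivAt (fun y : ℝ => aeval ((m : ℂ) + I * y) p)
      (aeval ((m : ℂ) + I * x) (derivative p) * I) x := by
  have hg : HasDerivAt (fun z : ℂ => (m : ℂ) + I * z) I x := by
    simpa using ((hasDerivAt_id (x : ℂ)).const_mul I).const_add (m : ℂ)
  exact ((p.hasDerivAt_aeval _).comp (x : ℂ) hg).comp_ofReal

theorem iteratedDeriv_modGaussian (m : ℝ) (n : ℕ) (x : ℝ) :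
    iteratedDeriv n (modGaussian m) x =
      I ^ n * aeval ((m : ℂ) + I * x) (modGaussianPoly n) * modGaussian m x := by
  induction n generalizing x with
  | zero => simp [modGaussianPoly]
  | succ n ih =>
    rw [iteratedDeriv_succ, funext ih]
    refine ((((hasDerivAt_aeval_ofReal_add_I_mul _ m x).const_mul (I ^ n)).mul
      (hasDerivAt_modGaussian m x))).deriv.trans ?_
    simp only [modGaussianPoly, map_add, map_mul, aeval_X]
    ring

theorem iteratedDeriv_modGaussian_zero (m : ℝ) (n : ℕ) :
    iteratedDeriv n (modGaussian m) 0 = I ^ n * (modGaussianPoly n).eval m := by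
  rw [iteratedDeriv_modGaussian]
  simpa [modGaussian] using (Polynomial.ofReal_eval (K := ℂ) _ m).symm

theorem norm_iteratedDeriv_modGaussian_le (m : ℝ) (n : ℕ) (x : ℝ) :
    ‖iteratedDeriv n (modGaussian m) x‖ ≤
      (modGaussianPoly n).eval 1 * ((1 + |m|) * (1 + |x|)) ^ n * Real.exp (-(x ^ 2 / 2)) := by
  rw [iteratedDeriv_modGaussian, norm_mul, norm_mul, norm_pow, norm_I, one_pow, one_mul,
    norm_modGaussian]
  gcongr
  have harg : 1 + ‖(m : ℂ) + I * x‖ ≤ (1 + |m|) * (1 + |x|) := by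
    have := norm_add_le (m : ℂ) (I * x)
    rw [norm_mul, norm_I, one_mul, norm_real, norm_real, Real.norm_eq_abs, Real.norm_eq_abs] at this
    nlinarith [abs_nonneg m, abs_nonneg x, mul_nonneg (abs_nonneg m) (abs_nonneg x)]
  calc ‖aeval ((m : ℂ) + I * x) (modGaussianPoly n)‖
      ≤ (modGaussianPoly n).eval 1 * (1 + ‖(m : ℂ) + I * x‖) ^ (modGaussianPoly n).natDegree :=
        norm_aeval_le_eval_one_mul_pow (modGaussianPoly_coeff_nonneg n) _
    _ ≤ (modGaussianPoly n).eval 1 * ((1 + |m|) * (1 + |x|)) ^ n := by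
        refine mul_le_mul_of_nonneg_left ?_
          (eval_nonneg_of_coeff_nonneg (modGaussianPoly_coeff_nonneg n) zero_le_one)
        have h1 : 1 ≤ 1 + ‖(m : ℂ) + I * x‖ := le_add_of_nonneg_right (norm_nonneg _)
        exact (pow_le_pow_right₀ h1 (modGaussianPoly_natDegree_le n)).trans
          (pow_le_pow_left₀ (zero_le_one.trans h1) harg n)

theorem one_add_abs_pow_mul_exp_neg_sq_le (d : ℕ) (x : ℝ) :
    (1 + |x|) ^ d * Real.exp (-(x ^ 2 / 2)) ≤ d.factorial * Real.exp (3 / 2) := by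
  have hpow : (1 + |x|) ^ d ≤ d.factorial * Real.exp (1 + |x|) := by
    have := Real.pow_div_factorial_le_exp (x := 1 + |x|) (by positivity) d
    rwa [div_le_iff₀ (by positivity), mul_comm] at this
  calc (1 + |x|) ^ d * Real.exp (-(x ^ 2 / 2))
      ≤ d.factorial * Real.exp (1 + |x|) * Real.exp (-(x ^ 2 / 2)) := by gcongr
    _ = d.factorial * Real.exp (1 + |x| - x ^ 2 / 2) := by
        rw [mul_assoc, ← Real.exp_add, sub_eq_add_neg]
    _ ≤ d.factorial * Real.exp (3 / 2) := by
        gcongr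
        nlinarith [sq_nonneg (|x| - 1), sq_abs x]

theorem abs_pow_mul_norm_iteratedDeriv_modGaussian_le (m : ℝ) (k n : ℕ) (x : ℝ) :
    |x| ^ k * ‖iteratedDeriv n (modGaussian m) x‖ ≤
      (modGaussianPoly n).eval 1 * (1 + |m|) ^ n * ((k + n).factorial * Real.exp (3 / 2)) := by
  have hP := eval_nonneg_of_coeff_nonneg (modGaussianPoly_coeff_nonneg n) zero_le_one
  calc |x| ^ k * ‖iteratedDeriv n (modGaussian m) x‖
      ≤ (1 + |x|) ^ k *
          ((modGaussianPoly n).eval 1 * ((1 + |m|) * (1 + |x|)) ^ n * Real.exp (-(x ^ 2 / 2))) := by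
        gcongr
        · linarith
        · exact norm_iteratedDeriv_modGaussian_le m n x
    _ = (modGaussianPoly n).eval 1 * (1 + |m|) ^ n *
          ((1 + |x|) ^ (k + n) * Real.exp (-(x ^ 2 / 2))) := by rw [mul_pow, pow_add]; ring
    _ ≤ _ := mul_le_mul_of_nonneg_left (one_add_abs_pow_mul_exp_neg_sq_le _ x) (by positivity)

noncomputable def modGaussianSchwartz (m : ℝ) : 𝓢(ℝ, ℂ) where
  toFun := modGaussian m
  smooth' := contDiff_modGaussian m
  decay' k n := ⟨_, fun x => by
    simpa only [Real.norm_eq_abs, norm_iteratedFDeriv_eq_norm_iteratedDeriv] using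
      abs_pow_mul_norm_iteratedDeriv_modGaussian_le m k n x⟩

theorem seminorm_modGaussianSchwartz_le (m : ℝ) (k n : ℕ) :
    SchwartzMap.seminorm ℝ k n (modGaussianSchwartz m) ≤
      (modGaussianPoly n).eval 1 * (1 + |m|) ^ n * ((k + n).factorial * Real.exp (3 / 2)) := by
  have hP := eval_nonneg_of_coeff_nonneg (modGaussianPoly_coeff_nonneg n) zero_le_one
  exact SchwartzMap.seminorm_le_bound' ℝ k n _ (by positivity)
    (abs_pow_mul_norm_iteratedDeriv_modGaussian_le m k n)

namespace SchwartzMap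

variable {ι E V : Type*} [NormedAddCommGroup E] [NormedSpace ℝ E] [NormedAddCommGroup V]
  [NormedSpace ℝ V] {f : ι → 𝓢(E, V)}

theorem summable_norm_iteratedFDeriv
    (hf : ∀ n, Summable fun i => SchwartzMap.seminorm ℝ 0 n (f i)) (n : ℕ) (x : E) :
    Summable fun i => ‖iteratedFDeriv ℝ n (f i) x‖ :=
  (hf n).of_nonneg_of_le (fun _ => norm_nonneg _)
    (fun i => norm_iteratedFDeriv_le_seminorm ℝ (f i) n x)

theorem iteratedFDeriv_tsum_apply [CompleteSpace V]
    (hf : ∀ n, Summable fun i => SchwartzMap.seminorm ℝ 0 n (f i)) (n : ℕ) (x : E) :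
    iteratedFDeriv ℝ n (fun y => ∑' i, f i y) x = ∑' i, iteratedFDeriv ℝ n (f i) x :=
  _root_.iteratedFDeriv_tsum_apply (fun i => (f i).smooth ⊤) (fun n _ => hf n)
    (fun n i x _ => norm_iteratedFDeriv_le_seminorm ℝ (f i) n x) le_top x

noncomputable def tsumOfSummable [CompleteSpace V] (f : ι → 𝓢(E, V))
    (hf : ∀ k n, Summable fun i => SchwartzMap.seminorm ℝ k n (f i)) : 𝓢(E, V) where
  toFun x := ∑' i, f i x
  smooth' := contDiff_tsum (fun i => (f i).smooth ⊤) (fun n _ => hf 0 n)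
    (fun n i x _ => norm_iteratedFDeriv_le_seminorm ℝ (f i) n x)
  decay' k n := ⟨∑' i, SchwartzMap.seminorm ℝ k n (f i), fun x => by
    have hsum := summable_norm_iteratedFDeriv (hf 0) n x
    rw [iteratedFDeriv_tsum_apply (hf 0)]
    calc ‖x‖ ^ k * ‖∑' i, iteratedFDeriv ℝ n (f i) x‖
        ≤ ‖x‖ ^ k * ∑' i, ‖iteratedFDeriv ℝ n (f i) x‖ := by
          gcongr; exact norm_tsum_le_tsum_norm hsum
      _ = ∑' i, ‖x‖ ^ k * ‖iteratedFDeriv ℝ n (f i) x‖ := tsum_mul_left.symm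
      _ ≤ ∑' i, SchwartzMap.seminorm ℝ k n (f i) :=
          (hsum.mul_left _).tsum_le_tsum (fun i => le_seminorm ℝ k n (f i) x) (hf k n)⟩

theorem iteratedDeriv_tsumOfSummable [CompleteSpace V] {f : ι → 𝓢(ℝ, V)}
    (hf : ∀ k n, Summable fun i => SchwartzMap.seminorm ℝ k n (f i)) (n : ℕ) (x : ℝ) :
    iteratedDeriv n (tsumOfSummable f hf) x = ∑' i, iteratedDeriv n (f i) x := by
  simp only [iteratedDeriv_eq_iteratedFDeriv]
  rw [← ContinuousMultilinearMap.tsum_eval]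
  · exact congrArg (· fun _ => 1) (iteratedFDeriv_tsum_apply (hf 0) n x)
  · exact .of_norm (summable_norm_iteratedFDeriv (hf 0) n x)

end SchwartzMap

theorem summable_inv_pow_mul_one_add_pow {m : ℕ → ℝ} (hm : ∀ j, 2 ≤ m j) (n : ℕ) :
    Summable fun j => (m j)⁻¹ ^ j * (1 + m j) ^ n := by
  refine Summable.of_norm_bounded_eventually_nat
    ((summable_geometric_two).mul_left (4 ^ n)) ?_
  filter_upwards [eventually_ge_atTop n] with j hj
  obtain ⟨d, rfl⟩ := Nat.exists_eq_add_of_le hj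
  have hm0 : 0 < m (n + d) := by linarith [hm (n + d)]
  rw [Real.norm_of_nonneg (by positivity)]
  calc (m (n + d))⁻¹ ^ (n + d) * (1 + m (n + d)) ^ n
      ≤ (m (n + d))⁻¹ ^ (n + d) * (2 * m (n + d)) ^ n := by
        gcongr; linarith [hm (n + d)]
    _ = 2 ^ n * (m (n + d))⁻¹ ^ d := by
        rw [pow_add, mul_pow, inv_pow, inv_pow]; field_simp
    _ ≤ 2 ^ n * (2⁻¹) ^ d := by gcongr; exact hm _
    _ = 4 ^ n * (1 / 2) ^ (n + d) := by
        rw [show (4 : ℝ) = 2 * 2 by norm_num, pow_add, mul_pow, one_div, inv_pow _ n]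
        field_simp

theorem iteratedDeriv_smul_modGaussianSchwartz_zero (t m : ℝ) (n : ℕ) :
    iteratedDeriv n (t • modGaussianSchwartz m) 0 =
      I ^ n * ↑(t * (modGaussianPoly n).eval m) := by
  change iteratedDeriv n (t • modGaussian m) 0 = _
  rw [iteratedDeriv_const_smul_field, iteratedDeriv_modGaussian_zero, real_smul]
  push_cast
  ring

theorem exists_schwartzMap_mul_pow_le_norm_iteratedDeriv_zero {ι : Type*} {m t : ι → ℝ}
    (hm : ∀ i, 0 ≤ m i) (ht : ∀ i, 0 ≤ t i) (hsum : ∀ n, Summable fun i => t i * (1 + m i) ^ n) :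
    ∃ φ : 𝓢(ℝ, ℂ), ∀ n i, t i * m i ^ n ≤ ‖iteratedDeriv n φ 0‖ := by
  set f : ι → 𝓢(ℝ, ℂ) := fun i => t i • modGaussianSchwartz (m i)
  have hf : ∀ k n, Summable fun i => SchwartzMap.seminorm ℝ k n (f i) := fun k n => by
    refine ((hsum n).mul_left ((modGaussianPoly n).eval 1 * ((k + n).factorial *
      Real.exp (3 / 2)))).of_nonneg_of_le (fun _ => apply_nonneg _ _) fun i => ?_
    rw [map_smul_eq_mul, Real.norm_of_nonneg (ht i)]
    have := seminorm_modGaussianSchwartz_le (m i) k n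
    rw [abs_of_nonneg (hm i)] at this
    calc t i * SchwartzMap.seminorm ℝ k n (modGaussianSchwartz (m i))
        ≤ t i * ((modGaussianPoly n).eval 1 * (1 + m i) ^ n * ((k + n).factorial *
          Real.exp (3 / 2))) := mul_le_mul_of_nonneg_left this (ht i)
      _ = _ := by ring
  have hterm : ∀ n i, 0 ≤ t i * (modGaussianPoly n).eval (m i) := fun n i =>
    mul_nonneg (ht i) (eval_nonneg_of_coeff_nonneg (modGaussianPoly_coeff_nonneg n) (hm i))
  have hterm_summable : ∀ n, Summable fun i => t i * (modGaussianPoly n).eval (m i) := fun n =>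
    (hf 0 n).of_nonneg_of_le (hterm n) fun i => by
      have := SchwartzMap.le_seminorm' ℝ 0 n (f i) 0
      rwa [pow_zero, one_mul, iteratedDeriv_smul_modGaussianSchwartz_zero, norm_mul, norm_pow,
        norm_I, one_pow, one_mul, norm_real, Real.norm_of_nonneg (hterm n i)] at this
  refine ⟨SchwartzMap.tsumOfSummable f hf, fun n i => ?_⟩
  rw [SchwartzMap.iteratedDeriv_tsumOfSummable]
  simp only [f, iteratedDeriv_smul_modGaussianSchwartz_zero]
  rw [tsum_mul_left, ← ofReal_tsum, norm_mul, norm_pow, norm_I, one_pow, one_mul, norm_real,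
    Real.norm_of_nonneg (tsum_nonneg (hterm n))]
  calc t i * m i ^ n ≤ t i * (modGaussianPoly n).eval (m i) :=
        mul_le_mul_of_nonneg_left (pow_le_eval_modGaussianPoly n (hm i)) (ht i)
    _ ≤ ∑' j, t j * (modGaussianPoly n).eval (m j) :=
        (hterm_summable n).le_tsum i fun j _ => hterm n j

theorem exists_schwartzMap_le_norm_iteratedDeriv_zero {k : ℕ → ℕ} (hk : ∀ j, j < k j)
    (a : ℕ → ℝ) : ∃ φ : 𝓢(ℝ, ℂ), ∀ j, a j ≤ ‖iteratedDeriv (k j) φ 0‖ := by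
  set m : ℕ → ℝ := fun j => max 2 (a j)
  have hm : ∀ j, 2 ≤ m j := fun j => le_max_left _ _
  have hm0 : ∀ j, 0 < m j := fun j => by linarith [hm j]
  obtain ⟨φ, hφ⟩ := exists_schwartzMap_mul_pow_le_norm_iteratedDeriv_zero (fun j => (hm0 j).le)
    (fun j => by positivity) (summable_inv_pow_mul_one_add_pow hm)
  refine ⟨φ, fun j => ?_⟩
  obtain ⟨d, hd⟩ := Nat.exists_eq_add_of_lt (hk j)
  calc a j ≤ m j := le_max_right _ _
    _ ≤ m j ^ (d + 1) := le_self_pow₀ (by linarith [hm j]) (by omega)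
    _ = (m j)⁻¹ ^ j * m j ^ k j := by
        rw [hd, add_assoc, pow_add (m j) j, inv_pow, ← mul_assoc,
          inv_mul_cancel₀ (pow_pos (hm0 j) j).ne', one_mul]
    _ ≤ _ := hφ (k j) j

theorem tendsto_nhds_zero_of_tendsto_sum_range_succ {G : Type*} [AddCommGroup G]
    [TopologicalSpace G] [IsTopologicalAddGroup G] {f : ℕ → G} {L : G}
    (h : Tendsto (fun N => ∑ k ∈ Finset.range (N + 1), f k) atTop (nhds L)) :
    Tendsto f atTop (nhds 0) := by
  rw [← tendsto_add_atTop_iff_nat 1, ← sub_self L]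
  refine ((h.comp (tendsto_add_atTop_nat 1)).sub h).congr fun N => ?_
  simp [Finset.sum_range_succ _ (N + 1)]

/-- If for every Schwartz function `φ` the partial sums
`∑_{k=0}^N c_k φ^{(k)}(0)` converge as `N → ∞`, then only finitely many `c_k` are nonzero. -/
theorem convergent_dirac_series_implies_finitely_many_coeffs (c : ℕ → ℂ)
    (h : ∀ φ : SchwartzMap ℝ ℂ, ∃ L : ℂ,
      Tendsto (fun N : ℕ => ∑ k ∈ Finset.range (N + 1), c k * iteratedDeriv k (⇑φ) 0)
        atTop (nhds L)) :
    {k : ℕ | c k ≠ 0}.Finite := by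
  by_contra hinf
  choose k hck hk using fun j => Set.Infinite.exists_gt hinf j
  obtain ⟨φ, hφ⟩ := exists_schwartzMap_le_norm_iteratedDeriv_zero hk fun j => ‖c (k j)‖⁻¹
  have hlarge : ∀ j, 1 ≤ ‖c (k j) * iteratedDeriv (k j) φ 0‖ := fun j => by
    rw [norm_mul, ← mul_inv_cancel₀ (norm_ne_zero_iff.mpr (hck j))]
    exact mul_le_mul_of_nonneg_left (hφ j) (norm_nonneg _)
  obtain ⟨L, hL⟩ := h φ
  have hk_tendsto : Tendsto k atTop atTop := tendsto_atTop_mono (fun j => (hk j).le) tendsto_id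
  have hsmall := ((tendsto_nhds_zero_of_tendsto_sum_range_succ hL).comp hk_tendsto).norm
  rw [norm_zero] at hsmall
  obtain ⟨j, hj⟩ := (hsmall.eventually (gt_mem_nhds one_pos)).exists
  exact (hlarge j).not_gt hj
end

section
/- For every real number κ, the function g : ℝ → ℝ defined by g(t) = ((t + √(t² + 4))/2)^κ is smooth and has temperate growth: for every n ∈ ℕ there exist C > 0 and m ∈ ℕ such that |g^{(n)}(t)| ≤ C (1 + |t|)^m for all t ∈ ℝ. -/
open Polynomial Real

noncomputable def sq4 (t : ℝ) : ℝ := Real.sqrt (t ^ 2 + 4)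
noncomputable def phiR (t : ℝ) : ℝ := (t + sq4 t) / 2
lemma sq4_sq (t : ℝ) : sq4 t ^ 2 = t ^ 2 + 4 := Real.sq_sqrt (by positivity)
lemma sq4_pos (t : ℝ) : 0 < sq4 t := Real.sqrt_pos.2 (by positivity)
lemma abs_lt_sq4 (t : ℝ) : |t| < sq4 t := by
  nlinarith [sq4_sq t, sq4_pos t, sq_abs t, abs_nonneg t]
lemma phiR_pos (t : ℝ) : 0 < phiR t := by
  have h := abs_lt_sq4 t; have := neg_abs_le t; unfold phiR; linarith


lemma sq4_le (t : ℝ) : sq4 t ≤ |t| + 2 := by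
  nlinarith [sq4_sq t, sq4_pos t, sq_abs t, abs_nonneg t]
lemma phiR_le (t : ℝ) : phiR t ≤ 1 + |t| := by
  have h := sq4_le t; have := le_abs_self t; unfold phiR; linarith
lemma phiR_mul (t : ℝ) : phiR t * (sq4 t - t) = 2 := by
  unfold phiR; linarith [sq4_sq t, sq_abs t]
lemma phiR_ge (t : ℝ) : 1 / (1 + |t|) ≤ phiR t := by
  have hb : (0:ℝ) < 1 + |t| := by positivity
  rw [div_le_iff₀ hb]
  nlinarith [phiR_mul t, sq4_le t, neg_abs_le t, phiR_pos t, abs_nonneg t]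

noncomputable def TT (κ : ℝ) (p q : Polynomial ℝ) (j : ℕ) (t : ℝ) : ℝ :=
  phiR t ^ κ * (p.eval t + q.eval t * sq4 t) / (t ^ 2 + 4) ^ j

noncomputable def Wpoly : Polynomial ℝ := X ^ 2 + C 4
noncomputable def Pnext (κ : ℝ) (p q : Polynomial ℝ) (j : ℕ) : Polynomial ℝ :=
  Wpoly * (C κ * q + derivative p) - C (2 * (j:ℝ)) * (X * p)
noncomputable def Qnext (κ : ℝ) (p q : Polynomial ℝ) (j : ℕ) : Polynomial ℝ :=
  C κ * p + Wpoly * derivative q + C (1 - 2 * (j:ℝ)) * (X * q)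

lemma hasDerivAt_sq4 (t : ℝ) : HasDerivAt sq4 (t / sq4 t) t := by
  have h : HasDerivAt (fun t : ℝ => t ^ 2 + 4) (2 * t) t := by
    simpa using (hasDerivAt_pow 2 t).add_const 4
  have h2 := (Real.hasDerivAt_sqrt (by positivity : t ^ 2 + 4 ≠ 0)).comp t h
  refine h2.congr_deriv ?_
  symm
  have := sq4_pos t
  field_simp [sq4]
  simp only [sq4, add_comm]

lemma hasDerivAt_phiR (t : ℝ) : HasDerivAt phiR (phiR t / sq4 t) t := by
  have h := ((hasDerivAt_id t).add (hasDerivAt_sq4 t)).div_const 2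
  refine h.congr_deriv ?_
  symm
  have := sq4_pos t
  unfold phiR
  field_simp
  ring

lemma hasDerivAt_rpow_phiR (κ t : ℝ) :
    HasDerivAt (fun t => phiR t ^ κ) (κ * phiR t ^ κ / sq4 t) t := by
  have hφ := phiR_pos t
  have h := (Real.hasDerivAt_rpow_const (p := κ) (Or.inl hφ.ne')).comp t (hasDerivAt_phiR t)
  refine h.congr_deriv ?_
  symm
  rw [Real.rpow_sub_one hφ.ne']
  have := sq4_pos t
  field_simp

lemma hasDerivAt_TT (κ : ℝ) (p q : Polynomial ℝ) (j : ℕ) (t : ℝ) :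
    HasDerivAt (TT κ p q j) (TT κ (Pnext κ p q j) (Qnext κ p q j) (j + 1) t) t := by
  have hs := hasDerivAt_sq4 t
  have hs0 := (sq4_pos t).ne'
  have hw : (0:ℝ) < t ^ 2 + 4 := by positivity
  have hN : HasDerivAt (fun t => p.eval t + q.eval t * sq4 t)
      (p.derivative.eval t + (q.derivative.eval t * sq4 t + q.eval t * (t / sq4 t))) t :=
    (p.hasDerivAt t).add ((q.hasDerivAt t).mul hs)
  have h2 : HasDerivAt (fun t : ℝ => t ^ 2 + 4) (2 * t) t := by
    simpa using (hasDerivAt_pow 2 t).add_const 4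
  have hDen : HasDerivAt (fun t : ℝ => (t ^ 2 + 4) ^ j)
      ((j:ℝ) * (t ^ 2 + 4) ^ (j - 1) * (2 * t)) t := h2.pow j
  have H := ((hasDerivAt_rpow_phiR κ t).mul hN).div hDen (pow_ne_zero j hw.ne')
  refine H.congr_deriv ?_
  symm
  have hsq := (sq4_sq t).symm
  obtain _ | k := j
  · simp only [TT, Pnext, Qnext, Wpoly, Nat.cast_zero, Nat.cast_one, pow_zero, pow_one,
      Nat.zero_add]
    simp only [eval_mul, eval_add, eval_sub, eval_C, eval_X, eval_pow, eval_ofNat]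
    rw [hsq]
    field_simp
    ring
  · simp only [TT, Pnext, Qnext, Wpoly, Nat.succ_sub_one, Pi.mul_apply]
    simp only [eval_mul, eval_add, eval_sub, eval_C, eval_X, eval_pow, eval_ofNat]
    rw [hsq]
    push_cast
    field_simp
    ring


lemma poly_bound (p : Polynomial ℝ) :
    ∃ C : ℝ, 0 < C ∧ ∃ m : ℕ, ∀ t : ℝ, |p.eval t| ≤ C * (1 + |t|) ^ m := by
  induction p using Polynomial.induction_on' with
  | add p q hp hq =>
    obtain ⟨C1, hC1, m1, H1⟩ := hp
    obtain ⟨C2, hC2, m2, H2⟩ := hq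
    refine ⟨C1 + C2, by positivity, max m1 m2, fun t => ?_⟩
    have hb : (1:ℝ) ≤ 1 + |t| := by linarith [abs_nonneg t]
    have e1 : (1 + |t|) ^ m1 ≤ (1 + |t|) ^ max m1 m2 := pow_le_pow_right₀ hb (le_max_left _ _)
    have e2 : (1 + |t|) ^ m2 ≤ (1 + |t|) ^ max m1 m2 := pow_le_pow_right₀ hb (le_max_right _ _)
    calc |(p + q).eval t| ≤ |p.eval t| + |q.eval t| := by
          rw [Polynomial.eval_add]; exact abs_add_le _ _
      _ ≤ C1 * (1 + |t|) ^ max m1 m2 + C2 * (1 + |t|) ^ max m1 m2 := by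
          have := H1 t; have := H2 t
          nlinarith
      _ = (C1 + C2) * (1 + |t|) ^ max m1 m2 := by ring
  | monomial n a =>
    refine ⟨|a| + 1, by positivity, n, fun t => ?_⟩
    have h1 : |t| ^ n ≤ (1 + |t|) ^ n :=
      pow_le_pow_left₀ (abs_nonneg t) (by linarith) n
    have h2 : (0:ℝ) < (1 + |t|) ^ n := by positivity
    calc |((Polynomial.monomial n) a).eval t| = |a| * |t| ^ n := by
          simp [Polynomial.eval_monomial, abs_mul, abs_pow]
      _ ≤ (|a| + 1) * (1 + |t|) ^ n := by nlinarith [abs_nonneg a]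

lemma rpow_phiR_bound (κ t : ℝ) : phiR t ^ κ ≤ (1 + |t|) ^ (⌈|κ|⌉₊ : ℕ) := by
  have hb : (1:ℝ) ≤ 1 + |t| := by linarith [abs_nonneg t]
  have hφ := phiR_pos t
  have h1 : phiR t ^ κ ≤ (1 + |t|) ^ |κ| := by
    rcases le_or_gt 0 κ with hκ | hκ
    · calc phiR t ^ κ ≤ (1 + |t|) ^ κ :=
            Real.rpow_le_rpow hφ.le (phiR_le t) hκ
        _ ≤ (1 + |t|) ^ |κ| :=
            Real.rpow_le_rpow_of_exponent_le hb (le_abs_self κ)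
    · have h2 : (0:ℝ) < 1 / (1 + |t|) := by positivity
      calc phiR t ^ κ ≤ (1 / (1 + |t|)) ^ κ :=
            Real.rpow_le_rpow_of_nonpos h2 (phiR_ge t) hκ.le
        _ = (1 + |t|) ^ (-κ) := by
            rw [one_div, ← Real.rpow_neg_one, ← Real.rpow_mul (by linarith)]
            norm_num
        _ = (1 + |t|) ^ |κ| := by rw [abs_of_neg hκ]
  calc phiR t ^ κ ≤ (1 + |t|) ^ |κ| := h1
    _ ≤ (1 + |t|) ^ ((⌈|κ|⌉₊ : ℕ) : ℝ) :=
        Real.rpow_le_rpow_of_exponent_le hb (Nat.le_ceil _)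
    _ = (1 + |t|) ^ (⌈|κ|⌉₊ : ℕ) := Real.rpow_natCast _ _

lemma TT_bound (κ : ℝ) (p q : Polynomial ℝ) (j : ℕ) :
    ∃ C : ℝ, 0 < C ∧ ∃ m : ℕ, ∀ t : ℝ, |TT κ p q j t| ≤ C * (1 + |t|) ^ m := by
  obtain ⟨Cp, hCp, mp, Hp⟩ := poly_bound p
  obtain ⟨Cq, hCq, mq, Hq⟩ := poly_bound q
  refine ⟨Cp + 2 * Cq, by positivity, ⌈|κ|⌉₊ + (max mp mq + 1), fun t => ?_⟩
  have hb : (1:ℝ) ≤ 1 + |t| := by linarith [abs_nonneg t]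
  have hφ := phiR_pos t
  have hw : (1:ℝ) ≤ (t ^ 2 + 4) ^ j := one_le_pow₀ (by nlinarith [sq_nonneg t])
  have hrpow : (0:ℝ) ≤ phiR t ^ κ := (Real.rpow_pos_of_pos hφ κ).le
  have habs : |TT κ p q j t| ≤ phiR t ^ κ * (|p.eval t| + |q.eval t| * sq4 t) := by
    rw [TT, abs_div, abs_mul, abs_of_nonneg hrpow, abs_of_pos (by positivity : (0:ℝ) < (t^2+4)^j)]
    calc phiR t ^ κ * |p.eval t + q.eval t * sq4 t| / (t ^ 2 + 4) ^ j
        ≤ phiR t ^ κ * |p.eval t + q.eval t * sq4 t| := by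
          apply div_le_self (by positivity) hw
      _ ≤ phiR t ^ κ * (|p.eval t| + |q.eval t| * sq4 t) := by
          apply mul_le_mul_of_nonneg_left _ hrpow
          calc |p.eval t + q.eval t * sq4 t| ≤ |p.eval t| + |q.eval t * sq4 t| := abs_add_le _ _
            _ = |p.eval t| + |q.eval t| * sq4 t := by
                rw [abs_mul, abs_of_pos (sq4_pos t)]
  have hsq4 : sq4 t ≤ 2 * (1 + |t|) := by linarith [sq4_le t]
  have e1 : (1 + |t|) ^ mp ≤ (1 + |t|) ^ max mp mq := pow_le_pow_right₀ hb (le_max_left _ _)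
  have e2 : (1 + |t|) ^ mq ≤ (1 + |t|) ^ max mp mq := pow_le_pow_right₀ hb (le_max_right _ _)
  have hnum : |p.eval t| + |q.eval t| * sq4 t ≤ (Cp + 2 * Cq) * (1 + |t|) ^ (max mp mq + 1) := by
    have h3 := Hp t
    have h4 := Hq t
    have h5 : |q.eval t| * sq4 t ≤ Cq * (1 + |t|) ^ mq * (2 * (1 + |t|)) := by
      apply mul_le_mul h4 hsq4 (sq4_pos t).le (by positivity)
    have h6 : (0:ℝ) < (1 + |t|) ^ max mp mq := by positivity
    calc |p.eval t| + |q.eval t| * sq4 t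
        ≤ Cp * (1 + |t|) ^ mp + Cq * (1 + |t|) ^ mq * (2 * (1 + |t|)) := by linarith
      _ ≤ Cp * (1 + |t|) ^ max mp mq * (1 + |t|) + 2 * Cq * ((1 + |t|) ^ max mp mq * (1 + |t|)) := by
          have hA : Cp * (1 + |t|) ^ mp ≤ Cp * (1 + |t|) ^ max mp mq * (1 + |t|) :=
            calc Cp * (1 + |t|) ^ mp ≤ Cp * (1 + |t|) ^ max mp mq :=
                  mul_le_mul_of_nonneg_left e1 hCp.le
              _ ≤ Cp * (1 + |t|) ^ max mp mq * (1 + |t|) :=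
                  le_mul_of_one_le_right (by positivity) hb
          have hB := mul_le_mul_of_nonneg_right (mul_le_mul_of_nonneg_left e2 hCq.le)
            (show (0:ℝ) ≤ 2 * (1 + |t|) by positivity)
          linarith
      _ = (Cp + 2 * Cq) * (1 + |t|) ^ (max mp mq + 1) := by rw [pow_succ]; ring
  calc |TT κ p q j t| ≤ phiR t ^ κ * (|p.eval t| + |q.eval t| * sq4 t) := habs
    _ ≤ (1 + |t|) ^ (⌈|κ|⌉₊ : ℕ) * ((Cp + 2 * Cq) * (1 + |t|) ^ (max mp mq + 1)) := by
        exact mul_le_mul (rpow_phiR_bound κ t) hnum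
          (add_nonneg (abs_nonneg _) (mul_nonneg (abs_nonneg _) (sq4_pos t).le)) (by positivity)
    _ = (Cp + 2 * Cq) * (1 + |t|) ^ (⌈|κ|⌉₊ + (max mp mq + 1)) := by rw [pow_add]; ring

noncomputable def FC (κ : ℝ) (z : ℂ) : ℂ := ((z + (z ^ 2 + 4) ^ (1/2 : ℂ)) / 2) ^ (κ : ℂ)

lemma inner_cast (t : ℝ) : ((t:ℂ) ^ 2 + 4) = ((t ^ 2 + 4 : ℝ) : ℂ) := by push_cast; ring

lemma sqrt_cast (t : ℝ) : ((t:ℂ) ^ 2 + 4) ^ (1/2 : ℂ) = ((sq4 t : ℝ) : ℂ) := by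
  rw [inner_cast, show ((1/2 : ℂ)) = ((1/2 : ℝ) : ℂ) by push_cast; ring,
    ← Complex.ofReal_cpow (by positivity)]
  rw [sq4, Real.sqrt_eq_rpow]

lemma FC_real (κ t : ℝ) : FC κ (t : ℂ) = ((phiR t ^ κ : ℝ) : ℂ) := by
  rw [FC, sqrt_cast, show ((t:ℂ) + ((sq4 t : ℝ):ℂ)) / 2 = ((phiR t : ℝ) : ℂ) by
    rw [phiR]; push_cast; ring]
  rw [← Complex.ofReal_cpow (phiR_pos t).le]

lemma analyticAt_FC (κ t : ℝ) : AnalyticAt ℂ (FC κ) (t : ℂ) := by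
  have h1 : AnalyticAt ℂ (fun z : ℂ => z ^ 2 + 4) (t : ℂ) :=
    ((analyticAt_id).pow 2).add analyticAt_const
  have hm1 : ((t:ℂ) ^ 2 + 4) ∈ Complex.slitPlane := by
    refine Or.inl ?_
    rw [inner_cast, Complex.ofReal_re]
    positivity
  have h2 : AnalyticAt ℂ (fun z : ℂ => (z ^ 2 + 4) ^ (1/2 : ℂ)) (t : ℂ) :=
    h1.cpow analyticAt_const hm1
  have h3 : AnalyticAt ℂ (fun z : ℂ => (z + (z ^ 2 + 4) ^ (1/2 : ℂ)) / 2) (t : ℂ) :=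
    ((analyticAt_id).add h2).div analyticAt_const (by norm_num)
  have hm2 : ((t:ℂ) + ((t:ℂ) ^ 2 + 4) ^ (1/2 : ℂ)) / 2 ∈ Complex.slitPlane := by
    rw [sqrt_cast, show ((t:ℂ) + ((sq4 t : ℝ):ℂ)) / 2 = ((phiR t : ℝ) : ℂ) by
      rw [phiR]; push_cast; ring]
    exact Or.inl (by simpa using phiR_pos t)
  exact h3.cpow analyticAt_const hm2

lemma contDiff_g (κ : ℝ) :
    ContDiff ℝ (⊤ : ℕ∞) (fun t : ℝ => ((t + Real.sqrt (t ^ 2 + 4)) / 2) ^ κ) := by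
  have heq : (fun t : ℝ => ((t + Real.sqrt (t ^ 2 + 4)) / 2) ^ κ) =
      fun t : ℝ => Complex.reCLM (FC κ (Complex.ofRealCLM t)) := by
    funext t
    simp only [Complex.ofRealCLM_apply, FC_real, Complex.reCLM_apply, Complex.ofReal_re]
    rfl
  rw [heq]
  apply contDiff_iff_contDiffAt.2
  intro t
  apply AnalyticAt.contDiffAt
  exact (Complex.reCLM.analyticAt _).comp
    (((analyticAt_FC κ t).restrictScalars).comp (Complex.ofRealCLM.analyticAt t))


/-- For every `κ : ℝ`, the function `g t = ((t + √(t²+4))/2)^κ` is smooth with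
temperate growth: each derivative is bounded by `C (1 + |t|)^m`. -/
theorem inverse_chart_rpow_smooth_temperate_growth (κ : ℝ) :
    ContDiff ℝ (⊤ : ℕ∞) (fun t : ℝ => ((t + Real.sqrt (t ^ 2 + 4)) / 2) ^ κ) ∧
    ∀ n : ℕ, ∃ C : ℝ, 0 < C ∧ ∃ m : ℕ, ∀ t : ℝ,
      |iteratedDeriv n (fun t : ℝ => ((t + Real.sqrt (t ^ 2 + 4)) / 2) ^ κ) t| ≤
        C * (1 + |t|) ^ m := by
  have key : ∀ n : ℕ, ∃ p q : Polynomial ℝ, ∃ j : ℕ,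
      iteratedDeriv n (fun t : ℝ => ((t + Real.sqrt (t ^ 2 + 4)) / 2) ^ κ) = TT κ p q j := by
    intro n
    induction n with
    | zero =>
      refine ⟨1, 0, 0, ?_⟩
      funext t
      simp [iteratedDeriv_zero, TT, phiR, sq4]
    | succ n ih =>
      obtain ⟨p, q, j, h⟩ := ih
      refine ⟨Pnext κ p q j, Qnext κ p q j, j + 1, ?_⟩
      rw [iteratedDeriv_succ, h]
      funext t
      exact (hasDerivAt_TT κ p q j t).deriv
  refine ⟨contDiff_g κ, fun n => ?_⟩
  obtain ⟨p, q, j, h⟩ := key n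
  rw [h]
  exact TT_bound κ p q j
end

section
/- Let n ∈ ℕ, let f : ℝ × ℝⁿ → ℂ be smooth on (0,∞) × ℝⁿ, and fix k ∈ ℕ and a multi-index α ∈ ℕⁿ. Suppose there exist m ∈ ℕ and C > 0 such that for every Schwartz function φ on ℝ^{1+n} vanishing on {λ ≤ 0}: sup_{λ>0, x∈ℝⁿ} |∂_λ^k ∂_x^α (f·φ)(λ,x)| ≤ C · max_{l ≤ m, |β| ≤ m} sup_{λ>0, x∈ℝⁿ} (1 + λ^m)(1 + ‖x‖²)^m |∂_λ^l ∂_x^β φ(λ,x)|. Then there exists C' > 0 such that |∂_λ^k ∂_x^α f(a, y)| ≤ C' (1 + a^m + a^{−m})(1 + ‖y‖²)^m for all a > 0 and y ∈ ℝⁿ. -/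
/-- Iterated mixed partial derivative of `f` in the directions `e i`, taken `β i` times in the
direction `e i`, for `i : Fin m`. -/
noncomputable def mixedPartial {E F : Type*} [NormedAddCommGroup E] [NormedSpace ℝ E]
    [NormedAddCommGroup F] [NormedSpace ℝ F] {m : ℕ}
    (e : Fin m → E) (β : Fin m → ℕ) (f : E → F) : E → F :=
  (List.finRange m).foldr (fun i g => (fun h x => fderiv ℝ h x (e i))^[β i] g) f

/-- The coordinate directions in `ℝ × ℝⁿ`: the first is the `λ`-direction, the others are the
standard basis vectors of `ℝⁿ`. -/
noncomputable def dirs (n : ℕ) : Fin (n + 1) → ℝ × (Fin n → ℝ) :=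
  Fin.cons ((1 : ℝ), (0 : Fin n → ℝ)) fun i => ((0 : ℝ), Pi.single i (1 : ℝ))

section Aux

variable {E F : Type*} [NormedAddCommGroup E] [NormedSpace ℝ E]
  [NormedAddCommGroup F] [NormedSpace ℝ F]

-- locality of the basic step
theorem iterate_dirderiv_congr (v : E) (j : ℕ) {U : Set E} (hU : IsOpen U)
    {g₁ g₂ : E → F} (hg : ∀ y ∈ U, g₁ y = g₂ y) :
    ∀ x ∈ U, (fun h x => fderiv ℝ h x v)^[j] g₁ x = (fun h x => fderiv ℝ h x v)^[j] g₂ x := by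
  induction j with
  | zero => simpa using hg
  | succ j ih =>
    intro x hx
    rw [Function.iterate_succ_apply', Function.iterate_succ_apply']
    have : (fun h x => fderiv ℝ h x v)^[j] g₁ =ᶠ[nhds x] (fun h x => fderiv ℝ h x v)^[j] g₂ :=
      Filter.eventually_of_mem (hU.mem_nhds hx) ih
    rw [this.fderiv_eq]

theorem foldr_congr {m : ℕ} (e : Fin m → E) (β : Fin m → ℕ) (L : List (Fin m))
    {U : Set E} (hU : IsOpen U) {g₁ g₂ : E → F} (hg : ∀ y ∈ U, g₁ y = g₂ y) :
    ∀ x ∈ U,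
      L.foldr (fun i g => (fun h x => fderiv ℝ h x (e i))^[β i] g) g₁ x =
      L.foldr (fun i g => (fun h x => fderiv ℝ h x (e i))^[β i] g) g₂ x := by
  induction L with
  | nil => simpa using hg
  | cons i L ih => exact iterate_dirderiv_congr (e i) (β i) hU ih

theorem mixedPartial_congr {m : ℕ} (e : Fin m → E) (β : Fin m → ℕ)
    {U : Set E} (hU : IsOpen U) {g₁ g₂ : E → F} (hg : ∀ y ∈ U, g₁ y = g₂ y)
    {x : E} (hx : x ∈ U) : mixedPartial e β g₁ x = mixedPartial e β g₂ x :=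
  foldr_congr e β _ hU hg x hx

theorem foldr_eq_iteratedFDeriv (L : List E) (g : E → F) (hg : ContDiff ℝ ((⊤:ℕ∞) : WithTop ℕ∞) g) (x : E) :
    L.foldr (fun v h => fun x => fderiv ℝ h x v) g x
      = iteratedFDeriv ℝ L.length g x L.get := by
  induction L generalizing x with
  | nil => simp [iteratedFDeriv_zero_apply]
  | cons v L ih =>
    have hrepr : L.foldr (fun v h => fun x => fderiv ℝ h x v) g
        = fun y => ContinuousMultilinearMap.apply ℝ (fun _ : Fin L.length => E) F L.get
            (iteratedFDeriv ℝ L.length g y) := by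
      funext y; exact ih y
    have hdiff : DifferentiableAt ℝ (iteratedFDeriv ℝ L.length g) x :=
      (hg.differentiable_iteratedFDeriv (by exact_mod_cast lt_top_iff_ne_top.2 (ENat.coe_ne_top _))) x
    calc fderiv ℝ (L.foldr (fun v h => fun x => fderiv ℝ h x v) g) x v
        = fderiv ℝ (fun y => ContinuousMultilinearMap.apply ℝ (fun _ : Fin L.length => E) F L.get
            (iteratedFDeriv ℝ L.length g y)) x v := by rw [hrepr]
      _ = (ContinuousMultilinearMap.apply ℝ (fun _ : Fin L.length => E) F L.get)
            (fderiv ℝ (iteratedFDeriv ℝ L.length g) x v) := by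
          have := ((ContinuousMultilinearMap.apply ℝ (fun _ : Fin L.length => E) F
            L.get).hasFDerivAt.comp x hdiff.hasFDerivAt).fderiv
          rw [show (fun y => ContinuousMultilinearMap.apply ℝ (fun _ : Fin L.length => E) F L.get
            (iteratedFDeriv ℝ L.length g y)) = (ContinuousMultilinearMap.apply ℝ
            (fun _ : Fin L.length => E) F L.get) ∘ (iteratedFDeriv ℝ L.length g) from rfl, this]
          rfl
      _ = iteratedFDeriv ℝ (L.length + 1) g x (Fin.cons v L.get) := by
          rw [iteratedFDeriv_succ_apply_left]; simp
      _ = iteratedFDeriv ℝ (v :: L).length g x (v :: L).get := by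
          congr 1; · exact (funext fun i => by refine Fin.cases ?_ ?_ i <;> simp)

theorem foldr_replicate (v : E) (j : ℕ) (g : E → F) :
    (List.replicate j v).foldr (fun v h => fun x => fderiv ℝ h x v) g
      = (fun h x => fderiv ℝ h x v)^[j] g := by
  induction j with
  | zero => rfl
  | succ j ih => rw [List.replicate_succ, List.foldr_cons, ih, Function.iterate_succ_apply']

theorem mixedPartial_eq_foldr {m : ℕ} (e : Fin m → E) (β : Fin m → ℕ) (g : E → F) :
    mixedPartial e β g
      = ((List.finRange m).flatMap fun i => List.replicate (β i) (e i)).foldr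
          (fun v h => fun x => fderiv ℝ h x v) g := by
  rw [mixedPartial]
  induction (List.finRange m) with
  | nil => rfl
  | cons i l ih => rw [List.flatMap_cons, List.foldr_append, List.foldr_cons, ih, foldr_replicate]

theorem norm_mixedPartial_le {m : ℕ} (e : Fin m → E) (β : Fin m → ℕ) (g : E → F)
    (hg : ContDiff ℝ ((⊤:ℕ∞) : WithTop ℕ∞) g) (he : ∀ i, ‖e i‖ ≤ 1) (x : E) :
    ‖mixedPartial e β g x‖ ≤ ‖iteratedFDeriv ℝ (∑ i, β i) g x‖ := by
  set L := (List.finRange m).flatMap fun i => List.replicate (β i) (e i) with hL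
  have hlen : L.length = ∑ i, β i := by
    rw [hL, List.length_flatMap, Fin.sum_univ_def]
    congr 1
    apply List.map_congr_left
    intro i _
    simp
  have h1 : mixedPartial e β g x = iteratedFDeriv ℝ L.length g x L.get := by
    rw [mixedPartial_eq_foldr, foldr_eq_iteratedFDeriv _ _ hg]
  rw [h1]
  calc ‖iteratedFDeriv ℝ L.length g x L.get‖
      ≤ ‖iteratedFDeriv ℝ L.length g x‖ * ∏ i, ‖L.get i‖ :=
        (iteratedFDeriv ℝ L.length g x).le_opNorm L.get
    _ ≤ ‖iteratedFDeriv ℝ L.length g x‖ * 1 := by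
        apply mul_le_mul_of_nonneg_left _ (norm_nonneg _)
        apply Finset.prod_le_one (fun i _ => norm_nonneg _)
        intro i _
        have hmem : L.get i ∈ L := L.get_mem i
        simp only [hL, List.mem_flatMap, List.mem_replicate] at hmem
        obtain ⟨j, -, -, hj⟩ := hmem
        rw [hj]
        exact he j
    _ = ‖iteratedFDeriv ℝ (∑ i, β i) g x‖ := by rw [mul_one, hlen]

theorem contDiff_dirderiv {g : E → F} (v : E) (hg : ContDiff ℝ ((⊤:ℕ∞) : WithTop ℕ∞) g) :
    ContDiff ℝ ((⊤:ℕ∞) : WithTop ℕ∞) (fun x => fderiv ℝ g x v) :=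
  (hg.fderiv_right (by exact_mod_cast le_top)).clm_apply contDiff_const

theorem contDiff_iterate_dirderiv {g : E → F} (v : E) (j : ℕ) (hg : ContDiff ℝ ((⊤:ℕ∞) : WithTop ℕ∞) g) :
    ContDiff ℝ ((⊤:ℕ∞) : WithTop ℕ∞) ((fun h x => fderiv ℝ h x v)^[j] g) := by
  induction j with
  | zero => exact hg
  | succ j ih => rw [Function.iterate_succ_apply']; exact contDiff_dirderiv v ih

theorem contDiff_foldr_dirderiv {m : ℕ} (e : Fin m → E) (β : Fin m → ℕ) (L : List (Fin m))
    {g : E → F} (hg : ContDiff ℝ ((⊤:ℕ∞) : WithTop ℕ∞) g) :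
    ContDiff ℝ ((⊤:ℕ∞) : WithTop ℕ∞) (L.foldr (fun i g => (fun h x => fderiv ℝ h x (e i))^[β i] g) g) := by
  induction L with
  | nil => exact hg
  | cons i L ih => exact contDiff_iterate_dirderiv (e i) (β i) ih

theorem contDiff_mixedPartial {m : ℕ} (e : Fin m → E) (β : Fin m → ℕ)
    {g : E → F} (hg : ContDiff ℝ ((⊤:ℕ∞) : WithTop ℕ∞) g) : ContDiff ℝ ((⊤:ℕ∞) : WithTop ℕ∞) (mixedPartial e β g) :=
  contDiff_foldr_dirderiv e β _ hg

theorem dirderiv_comp_sub {h : E → F} (hh : ContDiff ℝ ((⊤:ℕ∞) : WithTop ℕ∞) h) (v y x : E) :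
    fderiv ℝ (fun z => h (z - y)) x v = fderiv ℝ h (x - y) v := by
  have : fderiv ℝ (h ∘ fun z => z - y) x
      = (fderiv ℝ h (x - y)).comp (fderiv ℝ (fun z => z - y) x) :=
    fderiv_comp x (hh.differentiable (by simp) _) ((differentiable_id.sub_const y) x)
  have h2 : fderiv ℝ (fun z : E => z - y) x = ContinuousLinearMap.id ℝ E := by
    have : HasFDerivAt (fun z : E => z - y) (ContinuousLinearMap.id ℝ E) x :=
      (hasFDerivAt_id x).sub_const y
    exact this.fderiv
  rw [show (fun z => h (z - y)) = h ∘ (fun z => z - y) from rfl, this, h2]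
  rfl

theorem iterate_dirderiv_comp_sub {h : E → F} (hh : ContDiff ℝ ((⊤:ℕ∞) : WithTop ℕ∞) h) (v y : E) (j : ℕ) :
    (fun h x => fderiv ℝ h x v)^[j] (fun z => h (z - y))
      = fun z => ((fun h x => fderiv ℝ h x v)^[j] h) (z - y) := by
  induction j with
  | zero => rfl
  | succ j ih =>
    rw [Function.iterate_succ_apply', Function.iterate_succ_apply', ih]
    funext x
    exact dirderiv_comp_sub (contDiff_iterate_dirderiv v j hh) v y x

theorem foldr_dirderiv_comp_sub {m : ℕ} (e : Fin m → E) (β : Fin m → ℕ) (L : List (Fin m))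
    {h : E → F} (hh : ContDiff ℝ ((⊤:ℕ∞) : WithTop ℕ∞) h) (y : E) :
    L.foldr (fun i g => (fun h x => fderiv ℝ h x (e i))^[β i] g) (fun z => h (z - y))
      = fun z => (L.foldr (fun i g => (fun h x => fderiv ℝ h x (e i))^[β i] g) h) (z - y) := by
  induction L with
  | nil => rfl
  | cons i L ih =>
    rw [List.foldr_cons, List.foldr_cons, ih]
    exact iterate_dirderiv_comp_sub (contDiff_foldr_dirderiv e β L hh) (e i) y (β i)

theorem mixedPartial_comp_sub {m : ℕ} (e : Fin m → E) (β : Fin m → ℕ)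
    {h : E → F} (hh : ContDiff ℝ ((⊤:ℕ∞) : WithTop ℕ∞) h) (y z : E) :
    mixedPartial e β (fun x => h (x - y)) z = mixedPartial e β h (z - y) := by
  rw [mixedPartial, mixedPartial, foldr_dirderiv_comp_sub e β _ hh y]

variable {n : ℕ}

theorem contDiff_deriv_z {u : ℝ → ℂ} (hu : ContDiff ℝ ((⊤:ℕ∞) : WithTop ℕ∞) u) :
    ContDiff ℝ ((⊤:ℕ∞) : WithTop ℕ∞) (deriv u) := by
  have : deriv u = fun x => fderiv ℝ u x 1 := funext fun x => (fderiv_apply_one_eq_deriv).symm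
  rw [this]; exact contDiff_dirderiv 1 hu

theorem contDiff_iterate_deriv_z {u : ℝ → ℂ} (hu : ContDiff ℝ ((⊤:ℕ∞) : WithTop ℕ∞) u) (l : ℕ) :
    ContDiff ℝ ((⊤:ℕ∞) : WithTop ℕ∞) (deriv^[l] u) := by
  induction l with
  | zero => exact hu
  | succ l ih => rw [Function.iterate_succ_apply']; exact contDiff_deriv_z ih

theorem fderiv_mul_prod {u : ℝ → ℂ} {v : (Fin n → ℝ) → ℂ}
    (hu : Differentiable ℝ u) (hv : Differentiable ℝ v) (p : ℝ × (Fin n → ℝ))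
    (c : ℝ) (w : Fin n → ℝ) :
    fderiv ℝ (fun p : ℝ × (Fin n → ℝ) => u p.1 * v p.2) p (c, w)
      = c • deriv u p.1 * v p.2 + u p.1 * fderiv ℝ v p.2 w := by
  have h1 : HasFDerivAt (fun q : ℝ × (Fin n → ℝ) => u q.1)
      ((fderiv ℝ u p.1).comp (ContinuousLinearMap.fst ℝ ℝ (Fin n → ℝ))) p :=
    (hu p.1).hasFDerivAt.comp p hasFDerivAt_fst
  have h2 : HasFDerivAt (fun q : ℝ × (Fin n → ℝ) => v q.2)
      ((fderiv ℝ v p.2).comp (ContinuousLinearMap.snd ℝ ℝ (Fin n → ℝ))) p :=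
    (hv p.2).hasFDerivAt.comp p hasFDerivAt_snd
  have := (h1.mul h2).fderiv
  rw [show (fun p : ℝ × (Fin n → ℝ) => u p.1 * v p.2) = (fun q => u q.1) * (fun q => v q.2) from rfl,
    this]
  have hc : fderiv ℝ u p.1 c = c • deriv u p.1 := by
    calc fderiv ℝ u p.1 c = fderiv ℝ u p.1 (c • (1:ℝ)) := by norm_num
      _ = c • fderiv ℝ u p.1 1 := by rw [map_smul]
      _ = c • deriv u p.1 := by rw [fderiv_apply_one_eq_deriv]
  simp only [ContinuousLinearMap.add_apply, ContinuousLinearMap.smul_apply,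
    ContinuousLinearMap.coe_comp', Function.comp_apply, ContinuousLinearMap.coe_fst',
    ContinuousLinearMap.coe_snd', hc]
  ring_nf

theorem dirderiv_lambda_split {u : ℝ → ℂ} {v : (Fin n → ℝ) → ℂ}
    (hu : ContDiff ℝ ((⊤:ℕ∞) : WithTop ℕ∞) u) (hv : ContDiff ℝ ((⊤:ℕ∞) : WithTop ℕ∞) v) :
    (fun p : ℝ × (Fin n → ℝ) => fderiv ℝ (fun p : ℝ × (Fin n → ℝ) => u p.1 * v p.2) p
        ((1 : ℝ), (0 : Fin n → ℝ)))
      = fun p => deriv u p.1 * v p.2 := by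
  funext p
  rw [fderiv_mul_prod (hu.differentiable (by simp))
    (hv.differentiable (by simp)) p 1 0]
  simp

theorem dirderiv_x_split {u : ℝ → ℂ} {v : (Fin n → ℝ) → ℂ}
    (hu : ContDiff ℝ ((⊤:ℕ∞) : WithTop ℕ∞) u) (hv : ContDiff ℝ ((⊤:ℕ∞) : WithTop ℕ∞) v)
    (w : Fin n → ℝ) :
    (fun p : ℝ × (Fin n → ℝ) => fderiv ℝ (fun p : ℝ × (Fin n → ℝ) => u p.1 * v p.2) p
        ((0 : ℝ), w))
      = fun p => u p.1 * fderiv ℝ v p.2 w := by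
  funext p
  rw [fderiv_mul_prod (hu.differentiable (by simp))
    (hv.differentiable (by simp)) p 0 w]
  simp

theorem iterate_lambda_split {u : ℝ → ℂ} {v : (Fin n → ℝ) → ℂ}
    (hu : ContDiff ℝ ((⊤:ℕ∞) : WithTop ℕ∞) u) (hv : ContDiff ℝ ((⊤:ℕ∞) : WithTop ℕ∞) v) (l : ℕ) :
    (fun h x => fderiv ℝ h x ((1 : ℝ), (0 : Fin n → ℝ)))^[l]
        (fun p : ℝ × (Fin n → ℝ) => u p.1 * v p.2)
      = fun p => deriv^[l] u p.1 * v p.2 := by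
  induction l with
  | zero => rfl
  | succ l ih =>
    rw [Function.iterate_succ_apply', ih,
      dirderiv_lambda_split (contDiff_iterate_deriv_z hu l) hv]
    funext p
    rw [Function.iterate_succ_apply']

theorem iterate_x_split {u : ℝ → ℂ} {v : (Fin n → ℝ) → ℂ}
    (hu : ContDiff ℝ ((⊤:ℕ∞) : WithTop ℕ∞) u) (hv : ContDiff ℝ ((⊤:ℕ∞) : WithTop ℕ∞) v)
    (w : Fin n → ℝ) (j : ℕ) :
    (fun h x => fderiv ℝ h x ((0 : ℝ), w))^[j]
        (fun p : ℝ × (Fin n → ℝ) => u p.1 * v p.2)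
      = fun p => u p.1 * (fun h x => fderiv ℝ h x w)^[j] v p.2 := by
  induction j with
  | zero => rfl
  | succ j ih =>
    rw [Function.iterate_succ_apply', ih,
      dirderiv_x_split hu (contDiff_iterate_dirderiv w j hv) w]
    funext p
    rw [Function.iterate_succ_apply']

theorem foldr_succ_split {u : ℝ → ℂ} {v : (Fin n → ℝ) → ℂ}
    (hu : ContDiff ℝ ((⊤:ℕ∞) : WithTop ℕ∞) u) (hv : ContDiff ℝ ((⊤:ℕ∞) : WithTop ℕ∞) v)
    (l : ℕ) (β : Fin n → ℕ) (L : List (Fin n)) :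
    (L.map Fin.succ).foldr
        (fun i g => (fun h x => fderiv ℝ h x (dirs n i))^[(Fin.cons l β : Fin (n+1) → ℕ) i] g)
        (fun p : ℝ × (Fin n → ℝ) => u p.1 * v p.2)
      = fun p => u p.1 *
          (L.foldr (fun i g => (fun h x => fderiv ℝ h x (Pi.single i (1:ℝ)))^[β i] g) v) p.2 := by
  induction L with
  | nil => rfl
  | cons i L ih =>
    rw [List.map_cons, List.foldr_cons, ih, List.foldr_cons]
    have hsplit := iterate_x_split hu
      (contDiff_foldr_dirderiv (fun i : Fin n => Pi.single i (1:ℝ)) β L hv)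
      (Pi.single i (1:ℝ)) (β i)
    have h1 : dirs n i.succ = ((0:ℝ), Pi.single i (1:ℝ)) := by
      rw [dirs, Fin.cons_succ]
    have h2 : (Fin.cons l β : Fin (n+1) → ℕ) i.succ = β i := by simp
    rw [h1, h2]
    exact hsplit

theorem mixedPartial_split {u : ℝ → ℂ} {v : (Fin n → ℝ) → ℂ}
    (hu : ContDiff ℝ ((⊤:ℕ∞) : WithTop ℕ∞) u) (hv : ContDiff ℝ ((⊤:ℕ∞) : WithTop ℕ∞) v)
    (l : ℕ) (β : Fin n → ℕ) (p : ℝ × (Fin n → ℝ)) :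
    mixedPartial (dirs n) (Fin.cons l β) (fun p : ℝ × (Fin n → ℝ) => u p.1 * v p.2) p
      = deriv^[l] u p.1 * mixedPartial (fun i : Fin n => Pi.single i (1:ℝ)) β v p.2 := by
  rw [mixedPartial, List.finRange_succ, List.foldr_cons,
    foldr_succ_split hu hv l β (List.finRange n)]
  have h1 : dirs n 0 = ((1:ℝ), (0 : Fin n → ℝ)) := rfl
  have h2 : (Fin.cons l β : Fin (n+1) → ℕ) 0 = l := by simp
  rw [h1, h2, iterate_lambda_split hu
    (contDiff_foldr_dirderiv (fun i : Fin n => Pi.single i (1:ℝ)) β (List.finRange n) hv) l]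
  rfl

-- generalize deriv smoothness to any target
theorem contDiff_iterate_deriv_gen {u : ℝ → F} (hu : ContDiff ℝ ((⊤:ℕ∞) : WithTop ℕ∞) u) (l : ℕ) :
    ContDiff ℝ ((⊤:ℕ∞) : WithTop ℕ∞) (deriv^[l] u) := by
  induction l with
  | zero => exact hu
  | succ l ih =>
    rw [Function.iterate_succ_apply']
    have : deriv (deriv^[l] u) = fun x => fderiv ℝ (deriv^[l] u) x 1 :=
      funext fun x => (fderiv_apply_one_eq_deriv).symm
    rw [this]
    exact contDiff_dirderiv 1 ih

theorem scaled_deriv (g : ℝ → ℝ) (hg : ContDiff ℝ ((⊤:ℕ∞) : WithTop ℕ∞) g) (c : ℝ) (l : ℕ) :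
    deriv^[l] (fun t => ((g (c * t) : ℝ) : ℂ))
      = fun t => (c ^ l : ℂ) * ((deriv^[l] g (c * t) : ℝ) : ℂ) := by
  induction l with
  | zero => simp
  | succ l ih =>
    rw [Function.iterate_succ_apply', ih]
    funext t
    have hd : HasDerivAt (deriv^[l] g) (deriv^[l + 1] g (c * t)) (c * t) := by
      have := ((contDiff_iterate_deriv_gen hg l).differentiable
        (by simp) (c * t)).hasDerivAt
      rw [Function.iterate_succ_apply']
      exact this
    have hct : HasDerivAt (fun t : ℝ => c * t) c t := by
      simpa using (hasDerivAt_id t).const_mul c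
    have hcomp : HasDerivAt (fun t : ℝ => deriv^[l] g (c * t))
        (deriv^[l + 1] g (c * t) * c) t := hd.comp t hct
    have hre : HasDerivAt (fun t : ℝ => ((deriv^[l] g (c * t) : ℝ) : ℂ))
        (((deriv^[l + 1] g (c * t) * c : ℝ) : ℂ)) t := hcomp.ofReal_comp
    have hmul : HasDerivAt (fun t : ℝ => (c ^ l : ℂ) * ((deriv^[l] g (c * t) : ℝ) : ℂ))
        ((c ^ l : ℂ) * ((deriv^[l + 1] g (c * t) * c : ℝ) : ℂ)) t := hre.const_mul _
    rw [hmul.deriv]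
    push_cast
    ring

theorem support_iterate_deriv {g : ℝ → ℝ} (l : ℕ) :
    Function.support (deriv^[l] g) ⊆ tsupport g := by
  induction l with
  | zero => exact subset_closure
  | succ l ih =>
    rw [Function.iterate_succ_apply']
    exact support_deriv_subset.trans (closure_minimal ih isClosed_closure)

theorem exists_unif_bound {X : Type*} (g : ℕ → X → ℝ) (hb : ∀ l, ∃ B, ∀ x, g l x ≤ B) (m : ℕ) :
    ∃ B : ℝ, 1 ≤ B ∧ ∀ l ≤ m, ∀ x, g l x ≤ B := by
  induction m with
  | zero =>
    obtain ⟨B, hB⟩ := hb 0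
    exact ⟨max B 1, le_max_right _ _, fun l hl x => by
      interval_cases l; exact (hB x).trans (le_max_left _ _)⟩
  | succ m ih =>
    obtain ⟨B, hB1, hB⟩ := ih
    obtain ⟨B', hB'⟩ := hb (m + 1)
    refine ⟨max B B', hB1.trans (le_max_left _ _), fun l hl x => ?_⟩
    rcases Nat.lt_or_ge l (m + 1) with hc | hc
    · exact (hB l (Nat.lt_succ_iff.1 hc) x).trans (le_max_left _ _)
    · have : l = m + 1 := le_antisymm hl hc
      subst this
      exact (hB' x).trans (le_max_right _ _)

end Aux

set_option maxHeartbeats 1000000 in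
/-- If for the fixed pair `(k, α)` the mixed partial of `f·φ` is dominated, for
all Schwartz `φ` vanishing on `{λ ≤ 0}`, by `C` times the maximum over `l ≤ m`, `|β| ≤ m` of
`sup_{λ>0,x} (1+λ^m)(1+‖x‖²)^m |∂_λ^l ∂_x^β φ|`, then
`|∂_λ^k ∂_x^α f(a,y)| ≤ C' (1 + a^m + a^{−m})(1+‖y‖²)^m` for some `C' > 0`. -/
theorem multiplier_bound_implies_slowly_increasing (n : ℕ)
    (f : ℝ × (Fin n → ℝ) → ℂ)
    (hf : ContDiffOn ℝ (⊤ : ℕ∞) f (Set.Ioi (0 : ℝ) ×ˢ (Set.univ : Set (Fin n → ℝ))))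
    (k : ℕ) (α : Fin n → ℕ) (m : ℕ) (C : ℝ) (hC : 0 < C)
    (h : ∀ φ : SchwartzMap (ℝ × (Fin n → ℝ)) ℂ,
      (∀ p : ℝ × (Fin n → ℝ), p.1 ≤ 0 → φ p = 0) →
      ∀ lam : ℝ, 0 < lam → ∀ x : Fin n → ℝ,
        ‖mixedPartial (dirs n) (Fin.cons k α) (fun p => f p * φ p) (lam, x)‖ ≤
          C * ⨆ (l : ℕ) (_ : l ≤ m) (β : Fin n → ℕ) (_ : ∑ i, β i ≤ m)
                (p : ℝ × (Fin n → ℝ)) (_ : 0 < p.1),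
              (1 + p.1 ^ m) * (1 + ‖p.2‖ ^ 2) ^ m *
                ‖mixedPartial (dirs n) (Fin.cons l β) (⇑φ) p‖) :
    ∃ C' : ℝ, 0 < C' ∧ ∀ a : ℝ, 0 < a → ∀ y : Fin n → ℝ,
      ‖mixedPartial (dirs n) (Fin.cons k α) f (a, y)‖ ≤
        C' * (1 + a ^ m + (a ^ m)⁻¹) * (1 + ‖y‖ ^ 2) ^ m := by
  classical
  -- fixed model bump functions
  let ψ : ContDiffBump (1 : ℝ) := ⟨1/4, 1/2, by norm_num, by norm_num⟩
  let χ : ContDiffBump (0 : Fin n → ℝ) := ⟨1, 2, by norm_num, by norm_num⟩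
  set χC : (Fin n → ℝ) → ℂ := fun x => ((χ x : ℝ) : ℂ) with hχCdef
  have hχC_smooth : ContDiff ℝ ((⊤:ℕ∞) : WithTop ℕ∞) χC :=
    Complex.ofRealCLM.contDiff.comp χ.contDiff
  have hχC_cs : HasCompactSupport χC := by
    apply χ.hasCompactSupport.mono'
    intro x hx
    have : χ x ≠ 0 := by
      intro h0; apply hx; simp [hχCdef, h0]
    exact subset_closure this
  -- uniform bounds for derivatives of the model bumps
  have hrOutψ : ψ.rOut = 1/2 := rfl
  have hrInψ : ψ.rIn = 1/4 := rfl
  have hrOutχ : χ.rOut = 2 := rfl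
  have hrInχ : χ.rIn = 1 := rfl
  obtain ⟨Bψ, hBψ1, hBψ⟩ := exists_unif_bound (fun l s => |deriv^[l] (⇑ψ) s|)
    (fun l => by
      obtain ⟨B, hB⟩ := ((contDiff_iterate_deriv_gen (ψ.contDiff (n := (⊤ : ℕ∞)))
        l).continuous).bounded_above_of_compact_support
        (ψ.hasCompactSupport.mono' (support_iterate_deriv l))
      exact ⟨B, fun x => by simpa [Real.norm_eq_abs] using hB x⟩) m
  obtain ⟨Bχ, hBχ1, hBχ⟩ := exists_unif_bound
    (fun N (z : Fin n → ℝ) => ‖iteratedFDeriv ℝ N χC z‖)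
    (fun N => by
      obtain ⟨B, hB⟩ := (hχC_smooth.continuous_iteratedFDeriv
        (by exact_mod_cast le_top)).norm.bounded_above_of_compact_support
        (hχC_cs.iteratedFDeriv N).norm
      exact ⟨B, fun x => by simpa using hB x⟩) m
  -- support facts for the model bumps
  have hψ_supp : ∀ l s, s ∉ Set.Icc (1/2 : ℝ) (3/2) → deriv^[l] (⇑ψ) s = 0 := by
    intro l s hs
    by_contra h0
    apply hs
    have : s ∈ tsupport (⇑ψ) := support_iterate_deriv l h0
    rw [ψ.tsupport_eq, hrOutψ, Real.closedBall_eq_Icc] at this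
    convert this using 2 <;> norm_num
  have hχ_supp : ∀ N (z : Fin n → ℝ), 2 < ‖z‖ → iteratedFDeriv ℝ N χC z = 0 := by
    intro N z hz
    apply image_eq_zero_of_notMem_tsupport
    intro hmem
    have h1 : z ∈ tsupport χC := tsupport_iteratedFDeriv_subset N hmem
    have h2 : tsupport χC ⊆ Metric.closedBall 0 2 := by
      apply closure_minimal _ Metric.isClosed_closedBall
      intro x hx
      have hne : χ x ≠ 0 := by intro h0; apply hx; simp [hχCdef, h0]
      have hmem2 : x ∈ Function.support ⇑χ := hne
      rw [χ.support_eq, hrOutχ] at hmem2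
      exact Metric.ball_subset_closedBall hmem2
    have := h2 h1
    rw [Metric.mem_closedBall, dist_zero_right] at this
    linarith
  -- the final constant
  refine ⟨C * ((1 + (3/2 : ℝ) ^ m) * Bψ * (9 ^ m * Bχ)), by positivity, ?_⟩
  intro a ha y
  -- the test function
  set uC : ℝ → ℂ := fun t => ((ψ (a⁻¹ * t) : ℝ) : ℂ) with huCdef
  set vC : (Fin n → ℝ) → ℂ := fun x => ((χ (x - y) : ℝ) : ℂ) with hvCdef
  have hvC_eq : vC = fun x => χC (x - y) := rfl
  have huC_smooth : ContDiff ℝ ((⊤:ℕ∞) : WithTop ℕ∞) uC :=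
    Complex.ofRealCLM.contDiff.comp (ψ.contDiff.comp (contDiff_const.mul contDiff_id))
  have hvC_smooth : ContDiff ℝ ((⊤:ℕ∞) : WithTop ℕ∞) vC := by
    rw [hvC_eq]
    exact hχC_smooth.comp (contDiff_id.sub contDiff_const)
  set φfun : ℝ × (Fin n → ℝ) → ℂ := fun p => uC p.1 * vC p.2 with hφfundef
  have hφ_smooth : ContDiff ℝ ((⊤:ℕ∞) : WithTop ℕ∞) φfun :=
    (huC_smooth.comp contDiff_fst).mul (hvC_smooth.comp contDiff_snd)
  have huC_zero : ∀ t : ℝ, t ∉ Set.Ioo (a/2) (3*a/2) → uC t = 0 := by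
    intro t ht
    have e : a * (a⁻¹ * t) = t := by
      rw [← mul_assoc, mul_inv_cancel₀ ha.ne', one_mul]
    have : ψ (a⁻¹ * t) = 0 := by
      by_contra h0
      have hsupp : a⁻¹ * t ∈ Function.support ⇑ψ := h0
      rw [ψ.support_eq, hrOutψ, Metric.mem_ball, Real.dist_eq] at hsupp
      have h1 := abs_lt.1 hsupp
      apply ht
      constructor
      · nlinarith [mul_lt_mul_of_pos_left (by linarith [h1.1] : (1:ℝ)/2 < a⁻¹ * t) ha, e]
      · nlinarith [mul_lt_mul_of_pos_left (by linarith [h1.2] : a⁻¹ * t < 3/2) ha, e]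
    simp [huCdef, this]
  have hφ_cs : HasCompactSupport φfun := by
    have hsub : Function.support φfun ⊆
        (Set.Icc (a/2) (3*a/2)) ×ˢ (Metric.closedBall y 2) := by
      intro p hp
      have hne : uC p.1 ≠ 0 ∧ vC p.2 ≠ 0 := by
        constructor <;> intro h0 <;> apply hp <;> simp [hφfundef, h0]
      constructor
      · by_contra hmem
        exact hne.1 (huC_zero p.1 (fun hmem' => hmem ⟨hmem'.1.le, hmem'.2.le⟩))
      · have hne2 : χ (p.2 - y) ≠ 0 := by
          intro h0; exact hne.2 (by simp [hvCdef, h0])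
        have hball : p.2 - y ∈ Function.support ⇑χ := hne2
        rw [χ.support_eq, hrOutχ, Metric.mem_ball, dist_zero_right] at hball
        rw [Metric.mem_closedBall, dist_eq_norm]
        exact hball.le
    exact IsCompact.of_isClosed_subset
      (isCompact_Icc.prod (isCompact_closedBall y 2)) isClosed_closure
      (closure_minimal hsub (isClosed_Icc.prod Metric.isClosed_closedBall))
  have hφ_decay : ∀ k' N : ℕ, ∃ Cc : ℝ, ∀ x, ‖x‖ ^ k' * ‖iteratedFDeriv ℝ N φfun x‖ ≤ Cc := by
    intro k' N
    obtain ⟨B, hB⟩ := Continuous.bounded_above_of_compact_support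
      (f := fun x => ‖x‖ ^ k' * ‖iteratedFDeriv ℝ N φfun x‖)
      (((continuous_norm).pow k').mul
        (hφ_smooth.continuous_iteratedFDeriv (by exact_mod_cast le_top)).norm)
      (((hφ_cs.iteratedFDeriv N).norm).mono' (by
        intro x hx
        have hne : iteratedFDeriv ℝ N φfun x ≠ 0 := by
          intro h0; apply hx; simp [h0]
        exact subset_closure (by simpa using hne)))
    exact ⟨B, fun x => by simpa [Real.norm_eq_abs] using hB x⟩
  let φ : SchwartzMap (ℝ × (Fin n → ℝ)) ℂ := ⟨φfun, hφ_smooth, hφ_decay⟩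
  have hφ_coe : ⇑φ = φfun := rfl
  have hφ_vanish : ∀ p : ℝ × (Fin n → ℝ), p.1 ≤ 0 → φ p = 0 := by
    intro p hp
    have : uC p.1 = 0 := huC_zero p.1 (by
      intro hmem
      have := hmem.1
      nlinarith)
    show φfun p = 0
    simp [hφfundef, this]
  have key := h φ hφ_vanish a ha y
  -- replace f * φ by f on the left
  have hU : IsOpen ((Set.Ioo (3*a/4) (5*a/4)) ×ˢ (Metric.ball y 1)) :=
    isOpen_Ioo.prod Metric.isOpen_ball
  have hmemU : (a, y) ∈ (Set.Ioo (3*a/4) (5*a/4)) ×ˢ (Metric.ball y 1) := by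
    refine ⟨⟨by nlinarith, by nlinarith⟩, Metric.mem_ball_self one_pos⟩
  have heqU : ∀ p ∈ (Set.Ioo (3*a/4) (5*a/4)) ×ˢ (Metric.ball y 1),
      (fun p => f p * φ p) p = f p := by
    rintro ⟨t, x⟩ ⟨ht, hx⟩
    have hψ1 : ψ (a⁻¹ * t) = 1 := by
      apply ψ.one_of_mem_closedBall
      rw [Metric.mem_closedBall, Real.dist_eq, hrInψ, abs_le]
      have hainv := inv_pos.2 ha
      have hid : a⁻¹ * a = 1 := inv_mul_cancel₀ ha.ne'
      have hlow : (3:ℝ)/4 < a⁻¹ * t := by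
        nlinarith [mul_lt_mul_of_pos_left ht.1 hainv]
      have hhigh : a⁻¹ * t < 5/4 := by
        nlinarith [mul_lt_mul_of_pos_left ht.2 hainv]
      constructor <;> linarith
    have hχ1 : χ (x - y) = 1 := by
      apply χ.one_of_mem_closedBall
      rw [Metric.mem_closedBall, dist_zero_right, hrInχ]
      rw [Metric.mem_ball, dist_eq_norm] at hx
      exact hx.le
    show f (t, x) * φfun (t, x) = f (t, x)
    simp [hφfundef, huCdef, hvCdef, hψ1, hχ1]
  have hLHS : mixedPartial (dirs n) (Fin.cons k α) (fun p => f p * φ p) (a, y)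
      = mixedPartial (dirs n) (Fin.cons k α) f (a, y) :=
    mixedPartial_congr (dirs n) (Fin.cons k α) hU heqU hmemU
  rw [hLHS] at key
  -- now bound the iSup
  set D : ℝ := (1 + (3/2 : ℝ) ^ m) * Bψ * (9 ^ m * Bχ) *
    ((1 + a ^ m + (a ^ m)⁻¹) * (1 + ‖y‖ ^ 2) ^ m) with hDdef
  have hD0 : 0 ≤ D := by positivity
  have hsup_le : (⨆ (l : ℕ) (_ : l ≤ m) (β : Fin n → ℕ) (_ : ∑ i, β i ≤ m)
      (p : ℝ × (Fin n → ℝ)) (_ : 0 < p.1),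
      (1 + p.1 ^ m) * (1 + ‖p.2‖ ^ 2) ^ m *
        ‖mixedPartial (dirs n) (Fin.cons l β) (⇑φ) p‖) ≤ D := by
    apply Real.iSup_le _ hD0
    intro l
    apply Real.iSup_le _ hD0
    intro hl
    apply Real.iSup_le _ hD0
    intro β
    apply Real.iSup_le _ hD0
    intro hβ
    apply Real.iSup_le _ hD0
    intro p
    apply Real.iSup_le _ hD0
    intro hp
    -- split the mixed partial
    have hsplit : mixedPartial (dirs n) (Fin.cons l β) (⇑φ) p
        = deriv^[l] uC p.1 * mixedPartial (fun i : Fin n => Pi.single i (1:ℝ)) β vC p.2 := by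
      rw [hφ_coe]
      exact mixedPartial_split huC_smooth hvC_smooth l β p
    have hscale := scaled_deriv (⇑ψ) (ψ.contDiff (n := (⊤ : ℕ∞))) a⁻¹ l
    have hunorm : ‖deriv^[l] uC p.1‖ = (a⁻¹) ^ l * |deriv^[l] (⇑ψ) (a⁻¹ * p.1)| := by
      rw [huCdef, hscale, norm_mul, norm_pow]
      simp [Complex.norm_real, Real.norm_eq_abs, abs_of_pos ha, abs_of_pos (inv_pos.2 ha)]
    have hvnorm : ‖mixedPartial (fun i : Fin n => Pi.single i (1:ℝ)) β vC p.2‖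
        ≤ ‖iteratedFDeriv ℝ (∑ i, β i) χC (p.2 - y)‖ := by
      have htr : mixedPartial (fun i : Fin n => Pi.single i (1:ℝ)) β vC p.2
          = mixedPartial (fun i : Fin n => Pi.single i (1:ℝ)) β χC (p.2 - y) := by
        rw [hvC_eq]
        exact mixedPartial_comp_sub _ β hχC_smooth y p.2
      rw [htr]
      apply norm_mixedPartial_le _ β χC hχC_smooth
      intro i
      rw [pi_norm_le_iff_of_nonneg (by norm_num : (0:ℝ) ≤ 1)]
      intro j
      rw [Real.norm_eq_abs, Pi.single_apply]
      split_ifs <;> norm_num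
    set X : ℝ := (1 + p.1 ^ m) * ((a⁻¹) ^ l * |deriv^[l] (⇑ψ) (a⁻¹ * p.1)|) with hXdef
    set Y : ℝ := (1 + ‖p.2‖ ^ 2) ^ m * ‖iteratedFDeriv ℝ (∑ i, β i) χC (p.2 - y)‖ with hYdef
    have hmain : (1 + p.1 ^ m) * (1 + ‖p.2‖ ^ 2) ^ m *
        ‖mixedPartial (dirs n) (Fin.cons l β) (⇑φ) p‖ ≤ X * Y := by
      rw [hsplit, norm_mul, hunorm]
      have h1 : (1 + p.1 ^ m) * (1 + ‖p.2‖ ^ 2) ^ m *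
          ((a⁻¹) ^ l * |deriv^[l] (⇑ψ) (a⁻¹ * p.1)| *
            ‖mixedPartial (fun i : Fin n => Pi.single i (1:ℝ)) β vC p.2‖)
          ≤ (1 + p.1 ^ m) * (1 + ‖p.2‖ ^ 2) ^ m *
          ((a⁻¹) ^ l * |deriv^[l] (⇑ψ) (a⁻¹ * p.1)| *
            ‖iteratedFDeriv ℝ (∑ i, β i) χC (p.2 - y)‖) := by
        apply mul_le_mul_of_nonneg_left _ (by positivity)
        exact mul_le_mul_of_nonneg_left hvnorm (by positivity)
      refine h1.trans (le_of_eq ?_)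
      rw [hXdef, hYdef]; ring
    -- bound X
    have hX : X ≤ (1 + (3/2 : ℝ) ^ m) * Bψ * (1 + a ^ m + (a ^ m)⁻¹) := by
      by_cases hin : a⁻¹ * p.1 ∈ Set.Icc (1/2 : ℝ) (3/2)
      · have hp1 : p.1 ≤ 3/2 * a := by
          have h2 := hin.2
          have e : a * (a⁻¹ * p.1) = p.1 := by
            rw [← mul_assoc, mul_inv_cancel₀ ha.ne', one_mul]
          have h3 := mul_le_mul_of_nonneg_left h2 ha.le
          rw [e] at h3
          linarith
        have hppos : (0:ℝ) < p.1 := hp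
        have hpm : p.1 ^ m ≤ (3/2 : ℝ) ^ m * a ^ m := by
          calc p.1 ^ m ≤ (3/2 * a) ^ m := pow_le_pow_left₀ hppos.le hp1 m
            _ = (3/2 : ℝ) ^ m * a ^ m := mul_pow _ _ m
        have hψb : |deriv^[l] (⇑ψ) (a⁻¹ * p.1)| ≤ Bψ := hBψ l hl _
        have hinv1 : (a⁻¹) ^ l ≤ 1 + (a ^ m)⁻¹ := by
          rcases le_total 1 a with hc | hc
          · have : (a⁻¹) ^ l ≤ 1 :=
              pow_le_one₀ (inv_pos.2 ha).le (inv_le_one_of_one_le₀ hc)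
            have hnn : 0 ≤ (a ^ m)⁻¹ := by positivity
            linarith
          · have h1a : 1 ≤ a⁻¹ := one_le_inv_iff₀.2 ⟨ha, hc⟩
            have : (a⁻¹) ^ l ≤ (a⁻¹) ^ m := pow_le_pow_right₀ h1a hl
            rw [← inv_pow] at *
            have hnn : (0:ℝ) ≤ a ^ m := by positivity
            linarith [this]
        have hinv2 : a ^ m * (a⁻¹) ^ l ≤ 1 + a ^ m := by
          rcases le_total 1 a with hc | hc
          · have h1 : (a⁻¹) ^ l ≤ 1 :=
              pow_le_one₀ (inv_pos.2 ha).le (inv_le_one_of_one_le₀ hc)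
            have hnn : (0:ℝ) < a ^ m := by positivity
            nlinarith
          · have h1a : 1 ≤ a⁻¹ := one_le_inv_iff₀.2 ⟨ha, hc⟩
            have h1 : (a⁻¹) ^ l ≤ (a⁻¹) ^ m := pow_le_pow_right₀ h1a hl
            have h2 : a ^ m * (a⁻¹) ^ m = 1 := by
              rw [← mul_pow, mul_inv_cancel₀ ha.ne', one_pow]
            have hnn : (0:ℝ) < a ^ m := by positivity
            nlinarith
        have hbig : (1 + p.1 ^ m) * (a⁻¹) ^ l ≤
            (1 + (3/2 : ℝ) ^ m) * (1 + a ^ m + (a ^ m)⁻¹) := by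
          have e1 : (1 + p.1 ^ m) * (a⁻¹) ^ l ≤ (1 + (3/2:ℝ)^m * a ^ m) * (a⁻¹) ^ l := by
            apply mul_le_mul_of_nonneg_right _ (by positivity)
            linarith
          have e2 : (1 + (3/2:ℝ)^m * a ^ m) * (a⁻¹) ^ l
              = (a⁻¹) ^ l + (3/2:ℝ)^m * (a ^ m * (a⁻¹) ^ l) := by ring
          have h32 : (0:ℝ) < (3/2:ℝ)^m := by positivity
          have e3 : (a⁻¹) ^ l + (3/2:ℝ)^m * (a ^ m * (a⁻¹) ^ l)
              ≤ (1 + (a ^ m)⁻¹) + (3/2:ℝ)^m * (1 + a ^ m) := by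
            have := mul_le_mul_of_nonneg_left hinv2 h32.le
            linarith
          have e4 : (1 + (a ^ m)⁻¹) + (3/2:ℝ)^m * (1 + a ^ m)
              ≤ (1 + (3/2 : ℝ) ^ m) * (1 + a ^ m + (a ^ m)⁻¹) := by
            have ham : (0:ℝ) < a ^ m := by positivity
            have haminv : (0:ℝ) < (a ^ m)⁻¹ := by positivity
            nlinarith
          linarith
        calc X = (1 + p.1 ^ m) * (a⁻¹) ^ l * |deriv^[l] (⇑ψ) (a⁻¹ * p.1)| := by
              rw [hXdef]; ring
          _ ≤ (1 + p.1 ^ m) * (a⁻¹) ^ l * Bψ := by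
              apply mul_le_mul_of_nonneg_left hψb (by positivity)
          _ ≤ (1 + (3/2 : ℝ) ^ m) * (1 + a ^ m + (a ^ m)⁻¹) * Bψ := by
              apply mul_le_mul_of_nonneg_right hbig (by linarith)
          _ = (1 + (3/2 : ℝ) ^ m) * Bψ * (1 + a ^ m + (a ^ m)⁻¹) := by ring
      · have : deriv^[l] (⇑ψ) (a⁻¹ * p.1) = 0 := hψ_supp l _ hin
        rw [hXdef, this]
        simp only [abs_zero, mul_zero, zero_mul]
        positivity
    -- bound Y
    have hY : Y ≤ 9 ^ m * Bχ * (1 + ‖y‖ ^ 2) ^ m := by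
      by_cases hin : ‖p.2 - y‖ ≤ 2
      · have hb : ‖p.2‖ ≤ 2 + ‖y‖ := by
          calc ‖p.2‖ = ‖(p.2 - y) + y‖ := by rw [sub_add_cancel]
            _ ≤ ‖p.2 - y‖ + ‖y‖ := norm_add_le _ _
            _ ≤ 2 + ‖y‖ := by linarith
        have hbase : 1 + ‖p.2‖ ^ 2 ≤ 9 * (1 + ‖y‖ ^ 2) := by
          have h1 : ‖p.2‖ ^ 2 ≤ (2 + ‖y‖) ^ 2 :=
            pow_le_pow_left₀ (norm_nonneg _) hb 2
          nlinarith [norm_nonneg y, sq_nonneg (‖y‖ - 2)]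
        have hpow : (1 + ‖p.2‖ ^ 2) ^ m ≤ 9 ^ m * (1 + ‖y‖ ^ 2) ^ m := by
          calc (1 + ‖p.2‖ ^ 2) ^ m ≤ (9 * (1 + ‖y‖ ^ 2)) ^ m :=
                pow_le_pow_left₀ (by positivity) hbase m
            _ = 9 ^ m * (1 + ‖y‖ ^ 2) ^ m := mul_pow _ _ m
        have hχb : ‖iteratedFDeriv ℝ (∑ i, β i) χC (p.2 - y)‖ ≤ Bχ := hBχ _ hβ _
        calc Y ≤ (1 + ‖p.2‖ ^ 2) ^ m * Bχ :=
              mul_le_mul_of_nonneg_left hχb (by positivity)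
          _ ≤ 9 ^ m * (1 + ‖y‖ ^ 2) ^ m * Bχ :=
              mul_le_mul_of_nonneg_right hpow (by linarith)
          _ = 9 ^ m * Bχ * (1 + ‖y‖ ^ 2) ^ m := by ring
      · have : iteratedFDeriv ℝ (∑ i, β i) χC (p.2 - y) = 0 :=
          hχ_supp _ _ (by linarith [not_le.1 hin])
        rw [hYdef, this]
        simp only [norm_zero, mul_zero]
        positivity
    calc (1 + p.1 ^ m) * (1 + ‖p.2‖ ^ 2) ^ m *
          ‖mixedPartial (dirs n) (Fin.cons l β) (⇑φ) p‖ ≤ X * Y := hmain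
      _ ≤ ((1 + (3/2 : ℝ) ^ m) * Bψ * (1 + a ^ m + (a ^ m)⁻¹)) *
            (9 ^ m * Bχ * (1 + ‖y‖ ^ 2) ^ m) := by
          apply mul_le_mul hX hY _ (by positivity)
          rw [hYdef]; positivity
      _ = D := by rw [hDdef]; ring
  calc ‖mixedPartial (dirs n) (Fin.cons k α) f (a, y)‖
      ≤ C * ⨆ (l : ℕ) (_ : l ≤ m) (β : Fin n → ℕ) (_ : ∑ i, β i ≤ m)
          (p : ℝ × (Fin n → ℝ)) (_ : 0 < p.1),
          (1 + p.1 ^ m) * (1 + ‖p.2‖ ^ 2) ^ m *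
            ‖mixedPartial (dirs n) (Fin.cons l β) (⇑φ) p‖ := key
    _ ≤ C * D := mul_le_mul_of_nonneg_left hsup_le hC.le
    _ = C * ((1 + (3/2 : ℝ) ^ m) * Bψ * (9 ^ m * Bχ)) * (1 + a ^ m + (a ^ m)⁻¹) *
          (1 + ‖y‖ ^ 2) ^ m := by rw [hDdef]; ring
end
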